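/- arXiv:0911.5449 — 8 statements merged into one kernel-verified Lean document; each statement's English description precedes it below -/
import Mathlib

section
/- The subsession relation ⪯ is a precongruence with respect to parallel composition: if η ⪯ θ then for every η', η|η' ⪯ θ|η'. -/
/- Values and value types: values are integers or booleans, value types are sets of values. -/
abbrev Value := ℤ ⊕ Bool
abbrev VType := Set Value

def tInt : VType := Set.range Sum.inl
def tBool : VType := Set.range Sum.inr

/-- Session types: failure, success, value input/output, channel input/output (delegation),
external choice, internal choice, parallel composition. -/
inductive SessionType : Type
  | fail
  | succ
  | inV (t : VType) (η : SessionType)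
  | outV (t : VType) (η : SessionType)
  | inS (ρ : SessionType) (η : SessionType)
  | outS (ρ : SessionType) (η : SessionType)
  | choice (η θ : SessionType)
  | ichoice (η θ : SessionType)
  | par (η θ : SessionType)

open SessionType

/-- Labels of visible transitions. -/
inductive Label : Type
  | tick
  | inV (v : Value)
  | outV (v : Value)
  | inS (ρ : SessionType)
  | outS (ρ : SessionType)

/-- Visible (labeled) transitions of session types (rules r1,r3,r4,r5,r7,r9,r11,r12
and the symmetric variants). -/
inductive Vis : SessionType → Label → SessionType → Prop
  | r1 : Vis succ Label.tick succ
  | r3 (v : Value) (η : SessionType) : Vis (outV {v} η) (Label.outV v) η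
  | r4 (ρ η : SessionType) : Vis (outS ρ η) (Label.outS ρ) η
  | r5 (ρ η : SessionType) : Vis (inS ρ η) (Label.inS ρ) η
  | r7 {v : Value} {t : VType} (η : SessionType) : v ∈ t → Vis (inV t η) (Label.inV v) η
  | r9l {η μ η'} (θ : SessionType) : Vis η μ η' → Vis (choice η θ) μ η'
  | r9r {θ μ θ'} (η : SessionType) : Vis θ μ θ' → Vis (choice η θ) μ θ'
  | r11l {η μ η'} (θ : SessionType) : Vis η μ η' → μ ≠ Label.tick → Vis (par η θ) μ (par η' θ)
  | r11r {θ μ θ'} (η : SessionType) : Vis θ μ θ' → μ ≠ Label.tick → Vis (par η θ) μ (par η θ')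
  | r12 {η η' θ θ' : SessionType} : Vis η Label.tick η' → Vis θ Label.tick θ' →
      Vis (par η θ) Label.tick (par η' θ')

/-- Internal (unlabeled) transitions of session types (rules r2,r6,r8,r10,r13,r14,r15 and
symmetric variants), parameterized by the subtyping relation `sub` used in rules r14/r15. -/
inductive Red (sub : SessionType → SessionType → Prop) : SessionType → SessionType → Prop
  | r2l (η θ : SessionType) : Red sub (ichoice η θ) η
  | r2r (η θ : SessionType) : Red sub (ichoice η θ) θ
  | r6 {v : Value} {t : VType} (η : SessionType) : v ∈ t → Red sub (outV t η) (outV {v} η)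
  | r8l {η η'} (θ : SessionType) : Red sub η η' → Red sub (choice η θ) (choice η' θ)
  | r8r {θ θ'} (η : SessionType) : Red sub θ θ' → Red sub (choice η θ) (choice η θ')
  | r10l {η η'} (θ : SessionType) : Red sub η η' → Red sub (par η θ) (par η' θ)
  | r10r {θ θ'} (η : SessionType) : Red sub θ θ' → Red sub (par η θ) (par η θ')
  | r13l {η η' θ θ' : SessionType} {v : Value} : Vis η (Label.outV v) η' →
      Vis θ (Label.inV v) θ' → Red sub (par η θ) (par η' θ')
  | r13r {η η' θ θ' : SessionType} {v : Value} : Vis η (Label.inV v) η' →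
      Vis θ (Label.outV v) θ' → Red sub (par η θ) (par η' θ')
  | r14l {η η' θ θ' ρ ρ' : SessionType} : Vis η (Label.outS ρ) η' →
      Vis θ (Label.inS ρ') θ' → sub ρ ρ' → Red sub (par η θ) (par η' θ')
  | r14r {η η' θ θ' ρ ρ' : SessionType} : Vis η (Label.inS ρ') η' →
      Vis θ (Label.outS ρ) θ' → sub ρ ρ' → Red sub (par η θ) (par η' θ')
  | r15l {η η' θ θ' ρ ρ' : SessionType} : Vis η (Label.outS ρ) η' →
      Vis θ (Label.inS ρ') θ' → ¬ sub ρ ρ' → Red sub (par η θ) fail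
  | r15r {η η' θ θ' ρ ρ' : SessionType} : Vis η (Label.inS ρ') η' →
      Vis θ (Label.outS ρ) θ' → ¬ sub ρ ρ' → Red sub (par η θ) fail

/-- Weight of a session type: nesting depth of session types occurring in channel
input/output prefixes (used to break the circularity between transitions and subsession). -/
def weight : SessionType → ℕ
  | fail => 0
  | succ => 0
  | inV _ η => weight η
  | outV _ η => weight η
  | inS ρ η => max (weight ρ + 1) (weight η)
  | outS ρ η => max (weight ρ + 1) (weight η)
  | choice η θ => max (weight η) (weight θ)
  | ichoice η θ => max (weight η) (weight θ)
  | par η θ => max (weight η) (weight θ)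

/-- Reflexive-transitive closure of internal transitions. -/
def Reds (sub : SessionType → SessionType → Prop) : SessionType → SessionType → Prop :=
  Relation.ReflTransGen (Red sub)

/-- η can weakly perform the success action ✓. -/
def CanTick (sub : SessionType → SessionType → Prop) (η : SessionType) : Prop :=
  ∃ η' η'', Reds sub η η' ∧ Vis η' Label.tick η''

/-- Completeness: every internal reduct can weakly perform ✓. -/
def CompleteP (sub : SessionType → SessionType → Prop) (η : SessionType) : Prop :=
  ∀ η', Reds sub η η' → CanTick sub η'

/-- Subsession: preservation of completeness in all parallel contexts. -/
def PreceqP (sub : SessionType → SessionType → Prop) (η θ : SessionType) : Prop :=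
  ∀ ρ, CompleteP sub (par η ρ) → CompleteP sub (par θ ρ)

/-- Stratified approximations of the subsession relation. -/
def SubW : ℕ → SessionType → SessionType → Prop
  | 0 => fun _ _ => True
  | n + 1 => PreceqP (SubW n)

/-- The (stratified) subtyping relation used in the synchronization rules r14/r15:
at weight `n` it only depends on the strata below. -/
def SubRel (ρ ρ' : SessionType) : Prop := SubW (max (weight ρ) (weight ρ') + 1) ρ ρ'

/-- η is complete. -/
def SComplete (η : SessionType) : Prop := CompleteP SubRel η

/-- The subsession relation η ⪯ θ. -/
def Preceq (η θ : SessionType) : Prop := PreceqP SubRel η θ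

/-- The equivalence ≈ induced by ⪯. -/
def SEquiv (η θ : SessionType) : Prop := Preceq η θ ∧ Preceq θ η

/-- η is viable if some parallel context completes it. -/
def Viable (η : SessionType) : Prop := ∃ ρ, SComplete (par η ρ)

/-- Strong subsession η ⊑ θ : the closure of ⪯ under external-choice contexts. -/
def SSub (η θ : SessionType) : Prop := ∀ ρ, Preceq (choice η ρ) (choice θ ρ)

/-- The equivalence ≃ induced by ⊑. -/
def SSEquiv (η θ : SessionType) : Prop := SSub η θ ∧ SSub θ η

/-- Actions (prefixes) of session types. -/
inductive Act : Type
  | inV (t : VType)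
  | outV (t : VType)
  | inS (ρ : SessionType)
  | outS (ρ : SessionType)

/-- Prefixing a session type by an action. -/
def Act.pre : Act → SessionType → SessionType
  | .inV t, η => SessionType.inV t η
  | .outV t, η => SessionType.outV t η
  | .inS ρ, η => SessionType.inS ρ η
  | .outS ρ, η => SessionType.outS ρ η


section AuxAssoc

variable {sub : SessionType → SessionType → Prop}

/-- Dead shapes on the left-associated side. -/
def DeadL (z : SessionType) : Prop := z = fail ∨ ∃ y, z = par fail y

/-- Dead shapes on the right-associated side. -/
def DeadR (z : SessionType) : Prop := z = fail ∨ ∃ x, z = par x fail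

lemma deadL_red {z z'} (hd : DeadL z) (h : Red sub z z') : DeadL z' := by
  rcases hd with rfl | ⟨y, rfl⟩
  · cases h
  · cases h with
    | r10l _ h1 => cases h1
    | r10r _ h1 => exact Or.inr ⟨_, rfl⟩
    | r13l h1 _ => cases h1
    | r13r h1 _ => cases h1
    | r14l h1 _ _ => cases h1
    | r14r h1 _ _ => cases h1
    | r15l h1 _ _ => cases h1
    | r15r h1 _ _ => cases h1

lemma deadR_red {z z'} (hd : DeadR z) (h : Red sub z z') : DeadR z' := by
  rcases hd with rfl | ⟨x, rfl⟩
  · cases h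
  · cases h with
    | r10l _ h1 => exact Or.inr ⟨_, rfl⟩
    | r10r _ h1 => cases h1
    | r13l _ h1 => cases h1
    | r13r _ h1 => cases h1
    | r14l _ h1 _ => cases h1
    | r14r _ h1 _ => cases h1
    | r15l _ h1 _ => cases h1
    | r15r _ h1 _ => cases h1

lemma deadL_noTick {z z'} (hd : DeadL z) (h : Vis z Label.tick z') : False := by
  rcases hd with rfl | ⟨y, rfl⟩
  · cases h
  · cases h with
    | r11l _ h1 hne => exact hne rfl
    | r11r _ h1 hne => exact hne rfl
    | r12 h1 _ => cases h1

lemma deadR_noTick {z z'} (hd : DeadR z) (h : Vis z Label.tick z') : False := by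
  rcases hd with rfl | ⟨x, rfl⟩
  · cases h
  · cases h with
    | r11l _ h1 hne => exact hne rfl
    | r11r _ h1 hne => exact hne rfl
    | r12 _ h2 => cases h2

lemma deadL_noCanTick {z} (hd : DeadL z) : ¬ CanTick sub z := by
  rintro ⟨z', z'', hr, hv⟩
  have hd' : DeadL z' := by
    clear hv
    induction hr with
    | refl => exact hd
    | tail _ hstep ih => exact deadL_red ih hstep
  exact deadL_noTick hd' hv

lemma deadR_noCanTick {z} (hd : DeadR z) : ¬ CanTick sub z := by
  rintro ⟨z', z'', hr, hv⟩
  have hd' : DeadR z' := by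
    clear hv
    induction hr with
    | refl => exact hd
    | tail _ hstep ih => exact deadR_red ih hstep
  exact deadR_noTick hd' hv

lemma stepL {a b c z : SessionType} (h : Red sub (par (par a b) c) z) :
    (∃ a' b' c', z = par (par a' b') c' ∧
      Red sub (par a (par b c)) (par a' (par b' c'))) ∨
    (DeadL z ∧ ∃ w, Red sub (par a (par b c)) w ∧ DeadR w) := by
  cases h with
  | r10l _ h1 =>
    cases h1 with
    | r10l _ h2 => exact Or.inl ⟨_, _, _, rfl, .r10l _ h2⟩
    | r10r _ h2 => exact Or.inl ⟨_, _, _, rfl, .r10r _ (.r10l _ h2)⟩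
    | r13l h2 h3 => exact Or.inl ⟨_, _, _, rfl, .r13l h2 (.r11l _ h3 nofun)⟩
    | r13r h2 h3 => exact Or.inl ⟨_, _, _, rfl, .r13r h2 (.r11l _ h3 nofun)⟩
    | r14l h2 h3 hs => exact Or.inl ⟨_, _, _, rfl, .r14l h2 (.r11l _ h3 nofun) hs⟩
    | r14r h2 h3 hs => exact Or.inl ⟨_, _, _, rfl, .r14r h2 (.r11l _ h3 nofun) hs⟩
    | r15l h2 h3 hs =>
        exact Or.inr ⟨Or.inr ⟨_, rfl⟩, fail, .r15l h2 (.r11l _ h3 nofun) hs, Or.inl rfl⟩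
    | r15r h2 h3 hs =>
        exact Or.inr ⟨Or.inr ⟨_, rfl⟩, fail, .r15r h2 (.r11l _ h3 nofun) hs, Or.inl rfl⟩
  | r10r _ h1 => exact Or.inl ⟨_, _, _, rfl, .r10r _ (.r10r _ h1)⟩
  | r13l h1 h2 =>
    cases h1 with
    | r11l _ h3 _ => exact Or.inl ⟨_, _, _, rfl, .r13l h3 (.r11r _ h2 nofun)⟩
    | r11r _ h3 _ => exact Or.inl ⟨_, _, _, rfl, .r10r _ (.r13l h3 h2)⟩
  | r13r h1 h2 =>
    cases h1 with
    | r11l _ h3 _ => exact Or.inl ⟨_, _, _, rfl, .r13r h3 (.r11r _ h2 nofun)⟩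
    | r11r _ h3 _ => exact Or.inl ⟨_, _, _, rfl, .r10r _ (.r13r h3 h2)⟩
  | r14l h1 h2 hs =>
    cases h1 with
    | r11l _ h3 _ => exact Or.inl ⟨_, _, _, rfl, .r14l h3 (.r11r _ h2 nofun) hs⟩
    | r11r _ h3 _ => exact Or.inl ⟨_, _, _, rfl, .r10r _ (.r14l h3 h2 hs)⟩
  | r14r h1 h2 hs =>
    cases h1 with
    | r11l _ h3 _ => exact Or.inl ⟨_, _, _, rfl, .r14r h3 (.r11r _ h2 nofun) hs⟩
    | r11r _ h3 _ => exact Or.inl ⟨_, _, _, rfl, .r10r _ (.r14r h3 h2 hs)⟩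
  | r15l h1 h2 hs =>
    cases h1 with
    | r11l _ h3 _ =>
        exact Or.inr ⟨Or.inl rfl, fail, .r15l h3 (.r11r _ h2 nofun) hs, Or.inl rfl⟩
    | r11r _ h3 _ =>
        exact Or.inr ⟨Or.inl rfl, par a fail, .r10r _ (.r15l h3 h2 hs), Or.inr ⟨_, rfl⟩⟩
  | r15r h1 h2 hs =>
    cases h1 with
    | r11l _ h3 _ =>
        exact Or.inr ⟨Or.inl rfl, fail, .r15r h3 (.r11r _ h2 nofun) hs, Or.inl rfl⟩
    | r11r _ h3 _ =>
        exact Or.inr ⟨Or.inl rfl, par a fail, .r10r _ (.r15r h3 h2 hs), Or.inr ⟨_, rfl⟩⟩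

lemma stepR {a b c z : SessionType} (h : Red sub (par a (par b c)) z) :
    (∃ a' b' c', z = par a' (par b' c') ∧
      Red sub (par (par a b) c) (par (par a' b') c')) ∨
    (DeadR z ∧ ∃ w, Red sub (par (par a b) c) w ∧ DeadL w) := by
  cases h with
  | r10l _ h1 => exact Or.inl ⟨_, _, _, rfl, .r10l _ (.r10l _ h1)⟩
  | r10r _ h1 =>
    cases h1 with
    | r10l _ h2 => exact Or.inl ⟨_, _, _, rfl, .r10l _ (.r10r _ h2)⟩
    | r10r _ h2 => exact Or.inl ⟨_, _, _, rfl, .r10r _ h2⟩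
    | r13l h2 h3 => exact Or.inl ⟨_, _, _, rfl, .r13l (.r11r _ h2 nofun) h3⟩
    | r13r h2 h3 => exact Or.inl ⟨_, _, _, rfl, .r13r (.r11r _ h2 nofun) h3⟩
    | r14l h2 h3 hs => exact Or.inl ⟨_, _, _, rfl, .r14l (.r11r _ h2 nofun) h3 hs⟩
    | r14r h2 h3 hs => exact Or.inl ⟨_, _, _, rfl, .r14r (.r11r _ h2 nofun) h3 hs⟩
    | r15l h2 h3 hs =>
        exact Or.inr ⟨Or.inr ⟨_, rfl⟩, fail, .r15l (.r11r _ h2 nofun) h3 hs, Or.inl rfl⟩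
    | r15r h2 h3 hs =>
        exact Or.inr ⟨Or.inr ⟨_, rfl⟩, fail, .r15r (.r11r _ h2 nofun) h3 hs, Or.inl rfl⟩
  | r13l h1 h2 =>
    cases h2 with
    | r11l _ h3 _ => exact Or.inl ⟨_, _, _, rfl, .r10l _ (.r13l h1 h3)⟩
    | r11r _ h3 _ => exact Or.inl ⟨_, _, _, rfl, .r13l (.r11l _ h1 nofun) h3⟩
  | r13r h1 h2 =>
    cases h2 with
    | r11l _ h3 _ => exact Or.inl ⟨_, _, _, rfl, .r10l _ (.r13r h1 h3)⟩
    | r11r _ h3 _ => exact Or.inl ⟨_, _, _, rfl, .r13r (.r11l _ h1 nofun) h3⟩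
  | r14l h1 h2 hs =>
    cases h2 with
    | r11l _ h3 _ => exact Or.inl ⟨_, _, _, rfl, .r10l _ (.r14l h1 h3 hs)⟩
    | r11r _ h3 _ => exact Or.inl ⟨_, _, _, rfl, .r14l (.r11l _ h1 nofun) h3 hs⟩
  | r14r h1 h2 hs =>
    cases h2 with
    | r11l _ h3 _ => exact Or.inl ⟨_, _, _, rfl, .r10l _ (.r14r h1 h3 hs)⟩
    | r11r _ h3 _ => exact Or.inl ⟨_, _, _, rfl, .r14r (.r11l _ h1 nofun) h3 hs⟩
  | r15l h1 h2 hs =>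
    cases h2 with
    | r11l _ h3 _ =>
        exact Or.inr ⟨Or.inl rfl, par fail c, .r10l _ (.r15l h1 h3 hs), Or.inr ⟨_, rfl⟩⟩
    | r11r _ h3 _ =>
        exact Or.inr ⟨Or.inl rfl, fail, .r15l (.r11l _ h1 nofun) h3 hs, Or.inl rfl⟩
  | r15r h1 h2 hs =>
    cases h2 with
    | r11l _ h3 _ =>
        exact Or.inr ⟨Or.inl rfl, par fail c, .r10l _ (.r15r h1 h3 hs), Or.inr ⟨_, rfl⟩⟩
    | r11r _ h3 _ =>
        exact Or.inr ⟨Or.inl rfl, fail, .r15r (.r11l _ h1 nofun) h3 hs, Or.inl rfl⟩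

lemma redsL {a b c z : SessionType} (h : Reds sub (par (par a b) c) z) :
    (∃ a' b' c', z = par (par a' b') c' ∧
      Reds sub (par a (par b c)) (par a' (par b' c'))) ∨
    (DeadL z ∧ ∃ w, Reds sub (par a (par b c)) w ∧ DeadR w) := by
  induction h with
  | refl => exact Or.inl ⟨a, b, c, rfl, Relation.ReflTransGen.refl⟩
  | tail _ hstep ih =>
    rcases ih with ⟨a', b', c', rfl, hr⟩ | ⟨hd, w, hw, hdw⟩
    · rcases stepL hstep with ⟨a'', b'', c'', rfl, hr2⟩ | ⟨hd, w, hw, hdw⟩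
      · exact Or.inl ⟨_, _, _, rfl, hr.tail hr2⟩
      · exact Or.inr ⟨hd, w, hr.tail hw, hdw⟩
    · exact Or.inr ⟨deadL_red hd hstep, w, hw, hdw⟩

lemma redsR {a b c z : SessionType} (h : Reds sub (par a (par b c)) z) :
    (∃ a' b' c', z = par a' (par b' c') ∧
      Reds sub (par (par a b) c) (par (par a' b') c')) ∨
    (DeadR z ∧ ∃ w, Reds sub (par (par a b) c) w ∧ DeadL w) := by
  induction h with
  | refl => exact Or.inl ⟨a, b, c, rfl, Relation.ReflTransGen.refl⟩
  | tail _ hstep ih =>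
    rcases ih with ⟨a', b', c', rfl, hr⟩ | ⟨hd, w, hw, hdw⟩
    · rcases stepR hstep with ⟨a'', b'', c'', rfl, hr2⟩ | ⟨hd, w, hw, hdw⟩
      · exact Or.inl ⟨_, _, _, rfl, hr.tail hr2⟩
      · exact Or.inr ⟨hd, w, hr.tail hw, hdw⟩
    · exact Or.inr ⟨deadR_red hd hstep, w, hw, hdw⟩

lemma tickL {a b c z : SessionType} (h : Vis (par (par a b) c) Label.tick z) :
    ∃ z', Vis (par a (par b c)) Label.tick z' := by
  cases h with
  | r11l _ _ hne => exact absurd rfl hne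
  | r11r _ _ hne => exact absurd rfl hne
  | r12 h1 h2 =>
    cases h1 with
    | r11l _ _ hne => exact absurd rfl hne
    | r11r _ _ hne => exact absurd rfl hne
    | r12 ha hb => exact ⟨_, .r12 ha (.r12 hb h2)⟩

lemma tickR {a b c z : SessionType} (h : Vis (par a (par b c)) Label.tick z) :
    ∃ z', Vis (par (par a b) c) Label.tick z' := by
  cases h with
  | r11l _ _ hne => exact absurd rfl hne
  | r11r _ _ hne => exact absurd rfl hne
  | r12 h1 h2 =>
    cases h2 with
    | r11l _ _ hne => exact absurd rfl hne
    | r11r _ _ hne => exact absurd rfl hne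
    | r12 hb hc => exact ⟨_, .r12 (.r12 h1 hb) hc⟩

lemma completeRtoL {a b c : SessionType} (H : CompleteP sub (par a (par b c))) :
    CompleteP sub (par (par a b) c) := by
  intro z hz
  rcases redsL hz with ⟨a', b', c', rfl, hr⟩ | ⟨_, w, hw, hdw⟩
  · rcases H _ hr with ⟨w, w', hw, ht⟩
    rcases redsR hw with ⟨a'', b'', c'', rfl, hr2⟩ | ⟨hdw, _, _, _⟩
    · rcases tickR ht with ⟨z', hz'⟩
      exact ⟨_, _, hr2, hz'⟩
    · exact absurd (show CanTick sub w from ⟨_, _, Relation.ReflTransGen.refl, ht⟩) (deadR_noCanTick hdw)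
  · exact absurd (H w hw) (deadR_noCanTick hdw)

lemma completeLtoR {a b c : SessionType} (H : CompleteP sub (par (par a b) c)) :
    CompleteP sub (par a (par b c)) := by
  intro z hz
  rcases redsR hz with ⟨a', b', c', rfl, hr⟩ | ⟨_, w, hw, hdw⟩
  · rcases H _ hr with ⟨w, w', hw, ht⟩
    rcases redsL hw with ⟨a'', b'', c'', rfl, hr2⟩ | ⟨hdw, _, _, _⟩
    · rcases tickL ht with ⟨z', hz'⟩
      exact ⟨_, _, hr2, hz'⟩
    · exact absurd (show CanTick sub w from ⟨_, _, Relation.ReflTransGen.refl, ht⟩) (deadL_noCanTick hdw)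
  · exact absurd (H w hw) (deadL_noCanTick hdw)

end AuxAssoc

theorem preceq_par_precongruence {η θ : SessionType} (h : Preceq η θ) :
    ∀ η' : SessionType, Preceq (SessionType.par η η') (SessionType.par θ η') := by
  intro η' ρ hc
  exact completeRtoL (h (par η' ρ) (completeLtoR hc))
end

section
/- Internal choice is a lower bound with respect to subsession: for all session types η and θ, η ⊕ θ ⪯ η and η ⊕ θ ⪯ θ. -/
open SessionType

theorem ichoice_lower_bound (η θ : SessionType) :
    Preceq (SessionType.ichoice η θ) η ∧ Preceq (SessionType.ichoice η θ) θ := by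
  constructor <;>
  · intro ρ hc η' hr
    apply hc
    refine Relation.ReflTransGen.trans (Relation.ReflTransGen.single ?_) hr
    first
    | exact Red.r10l ρ (Red.r2l η θ)
    | exact Red.r10l ρ (Red.r2r η θ)
end

section
/- For all session types η, θ, ρ: (η ⊕ θ) | ρ is complete if and only if both η | ρ and θ | ρ are complete. Consequently, ⪯ is a precongruence with respect to internal choice. -/
open SessionType

lemma reds_par_right {sub : SessionType → SessionType → Prop} {η ρ ρ' : SessionType}
    (h : Reds sub ρ ρ') : Reds sub (par η ρ) (par η ρ') := by
  induction h with
  | refl => exact Relation.ReflTransGen.refl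
  | tail _ hstep ih => exact ih.tail (Red.r10r _ hstep)

lemma reds_ichoice_par {sub : SessionType → SessionType → Prop} {η θ ρ σ : SessionType}
    (h : Reds sub (par (ichoice η θ) ρ) σ) :
    (∃ ρ', Reds sub ρ ρ' ∧ σ = par (ichoice η θ) ρ') ∨
      Reds sub (par η ρ) σ ∨ Reds sub (par θ ρ) σ := by
  induction h with
  | refl => exact Or.inl ⟨ρ, Relation.ReflTransGen.refl, rfl⟩
  | tail _ hstep ih =>
    rcases ih with ⟨ρ', hρ, rfl⟩ | h | h
    · cases hstep with
      | r10l _ hr =>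
        cases hr with
        | r2l => exact Or.inr (Or.inl (reds_par_right hρ))
        | r2r => exact Or.inr (Or.inr (reds_par_right hρ))
      | r10r _ hr => exact Or.inl ⟨_, hρ.tail hr, rfl⟩
      | r13l hv _ => cases hv
      | r13r hv _ => cases hv
      | r14l hv _ _ => cases hv
      | r14r hv _ _ => cases hv
      | r15l hv _ _ => cases hv
      | r15r hv _ _ => cases hv
    · exact Or.inr (Or.inl (h.tail hstep))
    · exact Or.inr (Or.inr (h.tail hstep))

lemma ichoice_complete_iff (η θ ρ : SessionType) :
    SComplete (SessionType.par (SessionType.ichoice η θ) ρ) ↔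
      SComplete (SessionType.par η ρ) ∧ SComplete (SessionType.par θ ρ) := by
  constructor
  · intro hc
    constructor
    · intro σ hσ
      exact hc σ (Relation.ReflTransGen.head (Red.r10l _ (Red.r2l η θ)) hσ)
    · intro σ hσ
      exact hc σ (Relation.ReflTransGen.head (Red.r10l _ (Red.r2r η θ)) hσ)
  · rintro ⟨h1, h2⟩ σ hσ
    rcases reds_ichoice_par hσ with ⟨ρ', hρ, rfl⟩ | h | h
    · obtain ⟨σ₁, σ₂, hr, hv⟩ := h1 (par η ρ') (reds_par_right hρ)
      exact ⟨σ₁, σ₂, Relation.ReflTransGen.head (Red.r10l _ (Red.r2l η θ)) hr, hv⟩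
    · exact h1 σ h
    · exact h2 σ h

theorem ichoice_complete_iff_and_precongruence :
    (∀ η θ ρ : SessionType,
      SComplete (SessionType.par (SessionType.ichoice η θ) ρ) ↔
        SComplete (SessionType.par η ρ) ∧ SComplete (SessionType.par θ ρ)) ∧
    (∀ η θ ρ : SessionType, Preceq η θ →
      Preceq (SessionType.ichoice η ρ) (SessionType.ichoice θ ρ)) := by
  refine ⟨ichoice_complete_iff, ?_⟩
  intro η θ ρ hηθ σ hc
  obtain ⟨h1, h2⟩ := (ichoice_complete_iff η ρ σ).mp hc
  exact (ichoice_complete_iff θ ρ σ).mpr ⟨hηθ σ h1, h2⟩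
end

section
/- Subsession is a precongruence with respect to action prefix: if η ⪯ θ then α.η ⪯ α.θ for every action α. -/
open SessionType

section AuxProof

open SessionType Relation

variable {sub : SessionType → SessionType → Prop}

/-- One prefix can evolve into another by internal steps. -/
def PrefRed (A A' : Act) : Prop :=
  A' = A ∨ ∃ t v, A = Act.outV t ∧ A' = Act.outV {v} ∧ v ∈ t

lemma prefRed_refl (A : Act) : PrefRed A A := Or.inl rfl

lemma vis_pre {A : Act} {X Y : SessionType} {μ : Label} (h : Vis (A.pre X) μ Y) :
    Y = X ∧ μ ≠ Label.tick ∧ ∀ Z, Vis (A.pre Z) μ Z := by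
  cases A with
  | inV t =>
      cases h with
      | r7 _ hv => exact ⟨rfl, by simp, fun Z => Vis.r7 Z hv⟩
  | outV t =>
      cases h with
      | r3 v _ => exact ⟨rfl, by simp, fun Z => Vis.r3 v Z⟩
  | inS r =>
      cases h with
      | r5 _ _ => exact ⟨rfl, by simp, fun Z => Vis.r5 r Z⟩
  | outS r =>
      cases h with
      | r4 _ _ => exact ⟨rfl, by simp, fun Z => Vis.r4 r Z⟩

lemma red_pre {A : Act} {X Y : SessionType} (h : Red sub (A.pre X) Y) :
    ∃ A', Y = Act.pre A' X ∧ ∃ t v, A = Act.outV t ∧ A' = Act.outV {v} ∧ v ∈ t := by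
  cases A with
  | inV t => cases h
  | outV t =>
      cases h with
      | r6 _ hv => exact ⟨Act.outV {_}, rfl, t, _, rfl, rfl, hv⟩
  | inS r => cases h
  | outS r => cases h

lemma prefRed_trans {A A' A'' : Act} (h1 : PrefRed A A') (h2 : PrefRed A' A'') :
    PrefRed A A'' := by
  rcases h2 with rfl | ⟨t', v, hA', rfl, hv⟩
  · exact h1
  · rcases h1 with rfl | ⟨t, v0, rfl, rfl, hv0⟩
    · exact Or.inr ⟨t', v, hA', rfl, hv⟩
    · cases hA'
      simp only [Set.mem_singleton_iff] at hv
      subst hv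
      exact Or.inr ⟨t, _, rfl, rfl, hv0⟩

lemma prefRed_reds {A A' : Act} (h : PrefRed A A') (X : SessionType) :
    Reds sub (A.pre X) (A'.pre X) := by
  rcases h with rfl | ⟨t, v, rfl, rfl, hv⟩
  · exact Relation.ReflTransGen.refl
  · exact Relation.ReflTransGen.single (Red.r6 X hv)

lemma reds_par_left {a b : SessionType} (h : Reds sub a b) (X : SessionType) :
    Reds sub (par a X) (par b X) := by
  induction h with
  | refl => exact Relation.ReflTransGen.refl
  | tail _ hstep ih => exact ih.tail (Red.r10l X hstep)

lemma reds_par_right_s6 {a b : SessionType} (h : Reds sub a b) (X : SessionType) :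
    Reds sub (par X a) (par X b) := by
  induction h with
  | refl => exact Relation.ReflTransGen.refl
  | tail _ hstep ih => exact ih.tail (Red.r10r X hstep)

lemma lift_pre {A A' : Act} {X ρ ρ' : SessionType} (hA : PrefRed A A')
    (hρ : Reds sub ρ ρ') :
    Reds sub (par (A.pre X) ρ) (par (A'.pre X) ρ') :=
  (reds_par_left (prefRed_reds hA X) ρ).trans (reds_par_right_s6 hρ _)

/-- A synchronization consuming the prefix, uniform in the continuation. -/
def Sync (sub : SessionType → SessionType → Prop) (A : Act) (ρ ρ' : SessionType) : Prop :=
  ∀ X, Red sub (par (A.pre X) ρ) (par X ρ')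

/-- A failing synchronization, uniform in the continuation. -/
def FSync (sub : SessionType → SessionType → Prop) (A : Act) (ρ : SessionType) : Prop :=
  ∀ X, Red sub (par (A.pre X) ρ) SessionType.fail

lemma classify {A : Act} {X ρ σ : SessionType} (h : Reds sub (par (A.pre X) ρ) σ) :
    (∃ A' ρ', σ = par (A'.pre X) ρ' ∧ PrefRed A A' ∧ Reds sub ρ ρ') ∨
    (∃ A' ρ' ρ'', PrefRed A A' ∧ Reds sub ρ ρ' ∧ Sync sub A' ρ' ρ'' ∧
      Reds sub (par X ρ'') σ) ∨
    (σ = SessionType.fail ∧ ∃ A' ρ', PrefRed A A' ∧ Reds sub ρ ρ' ∧ FSync sub A' ρ') := by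
  induction h with
  | refl => exact Or.inl ⟨A, ρ, rfl, prefRed_refl A, Relation.ReflTransGen.refl⟩
  | tail _ hstep ih =>
      rcases ih with ⟨A', ρ', rfl, hA, hρ⟩ | ⟨A', ρ', ρ'', hA, hρ, hs, hr⟩ | ⟨rfl, _⟩
      · cases hstep with
        | r10l _ h' =>
            obtain ⟨A'', rfl, t, v, hAeq, rfl, hv⟩ := red_pre h'
            exact Or.inl ⟨_, _, rfl, prefRed_trans hA (Or.inr ⟨t, v, hAeq, rfl, hv⟩), hρ⟩
        | r10r _ h' => exact Or.inl ⟨A', _, rfl, hA, hρ.tail h'⟩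
        | r13l hv1 hv2 =>
            obtain ⟨rfl, -, hall⟩ := vis_pre hv1
            exact Or.inr (Or.inl ⟨A', ρ', _, hA, hρ,
              fun Z => Red.r13l (hall Z) hv2, Relation.ReflTransGen.refl⟩)
        | r13r hv1 hv2 =>
            obtain ⟨rfl, -, hall⟩ := vis_pre hv1
            exact Or.inr (Or.inl ⟨A', ρ', _, hA, hρ,
              fun Z => Red.r13r (hall Z) hv2, Relation.ReflTransGen.refl⟩)
        | r14l hv1 hv2 hsub =>
            obtain ⟨rfl, -, hall⟩ := vis_pre hv1
            exact Or.inr (Or.inl ⟨A', ρ', _, hA, hρ,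
              fun Z => Red.r14l (hall Z) hv2 hsub, Relation.ReflTransGen.refl⟩)
        | r14r hv1 hv2 hsub =>
            obtain ⟨rfl, -, hall⟩ := vis_pre hv1
            exact Or.inr (Or.inl ⟨A', ρ', _, hA, hρ,
              fun Z => Red.r14r (hall Z) hv2 hsub, Relation.ReflTransGen.refl⟩)
        | r15l hv1 hv2 hsub =>
            exact Or.inr (Or.inr ⟨rfl, A', ρ', hA, hρ,
              fun Z => Red.r15l ((vis_pre hv1).2.2 Z) hv2 hsub⟩)
        | r15r hv1 hv2 hsub =>
            exact Or.inr (Or.inr ⟨rfl, A', ρ', hA, hρ,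
              fun Z => Red.r15r ((vis_pre hv1).2.2 Z) hv2 hsub⟩)
      · exact Or.inr (Or.inl ⟨A', ρ', ρ'', hA, hρ, hs, hr.tail hstep⟩)
      · cases hstep

lemma reds_fail {σ : SessionType} (h : Reds sub SessionType.fail σ) :
    σ = SessionType.fail := by
  induction h with
  | refl => rfl
  | tail _ hstep ih => subst ih; cases hstep

lemma not_canTick_fail : ¬ CanTick sub SessionType.fail := by
  rintro ⟨a, b, hr, hv⟩
  have := reds_fail hr
  subst this
  cases hv

lemma no_tick_pre {A : Act} {X Y ρ : SessionType}
    (h : Vis (par (A.pre X) ρ) Label.tick Y) : False := by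
  cases h with
  | r11l _ _ hne => exact hne rfl
  | r11r _ _ hne => exact hne rfl
  | r12 h1 _ => exact (vis_pre h1).2.1 rfl

lemma completeP_reds {x y : SessionType} (hc : CompleteP sub x) (h : Reds sub x y) :
    CompleteP sub y := fun z hz => hc z (h.trans hz)

lemma sync_of_canTick {A : Act} {X ρ : SessionType}
    (h : CanTick sub (par (A.pre X) ρ)) :
    ∃ A' ρ' ρ'', PrefRed A A' ∧ Reds sub ρ ρ' ∧ Sync sub A' ρ' ρ'' ∧
      CanTick sub (par X ρ'') := by
  obtain ⟨a, b, hr, hv⟩ := h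
  rcases classify hr with ⟨A', ρ', rfl, -, -⟩ | ⟨A', ρ', ρ'', hA, hρ, hs, hr2⟩ | ⟨rfl, -⟩
  · exact (no_tick_pre hv).elim
  · exact ⟨A', ρ', ρ'', hA, hρ, hs, a, b, hr2, hv⟩
  · cases hv

end AuxProof

theorem preceq_prefix_precongruence {η θ : SessionType} (h : Preceq η θ) :
    ∀ α : Act, Preceq (α.pre η) (α.pre θ) := by
  intro α ρ hc σ hσ
  rcases classify hσ with ⟨A', ρ', rfl, hA, hρ⟩ | ⟨A', ρ', ρ'', hA, hρ, hs, hr⟩ |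
    ⟨rfl, A', ρ', hA, hρ, hf⟩
  · have hη : Reds SubRel (par (α.pre η) ρ) (par (A'.pre η) ρ') := lift_pre hA hρ
    have hct : CanTick SubRel (par (A'.pre η) ρ') := hc _ hη
    obtain ⟨A'', ρ₂, ρ₃, hA2, hρ2, hs2, -⟩ := sync_of_canTick hct
    have hreach : Reds SubRel (par (α.pre η) ρ) (par η ρ₃) :=
      (hη.trans (lift_pre hA2 hρ2)).tail (hs2 η)
    have hcθ : CompleteP SubRel (par θ ρ₃) := h ρ₃ (completeP_reds hc hreach)
    obtain ⟨a, b, hr, hv⟩ := hcθ _ Relation.ReflTransGen.refl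
    exact ⟨a, b, ((lift_pre hA2 hρ2).tail (hs2 θ)).trans hr, hv⟩
  · have hreach : Reds SubRel (par (α.pre η) ρ) (par η ρ'') :=
      (lift_pre hA hρ).tail (hs η)
    exact h ρ'' (completeP_reds hc hreach) σ hr
  · exfalso
    have hreach : Reds SubRel (par (α.pre η) ρ) SessionType.fail :=
      (lift_pre hA hρ).tail (hf η)
    exact not_canTick_fail (hc _ hreach)
end

section
/- A session type η is not viable if and only if η ⊑ 0, where ⊑ is the strong subsession relation. -/
open SessionType

section Aux

variable {s : SessionType → SessionType → Prop}

lemma not_vis_fail {μ x} : ¬ Vis SessionType.fail μ x := by rintro ⟨⟩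

lemma not_red_fail {x} : ¬ Red s SessionType.fail x := by rintro ⟨⟩

lemma reds_fail_eq {x} (h : Reds s SessionType.fail x) : x = SessionType.fail := by
  induction h with
  | refl => rfl
  | tail _ h2 ih => subst ih; exact absurd h2 not_red_fail

lemma CanTick.of_red {a b} (h : Red s a b) (hc : CanTick s b) : CanTick s a := by
  obtain ⟨z, z', hr, hv⟩ := hc
  exact ⟨z, z', Relation.ReflTransGen.head h hr, hv⟩

lemma CanTick.of_reds {a b} (h : Reds s a b) (hc : CanTick s b) : CanTick s a := by
  obtain ⟨z, z', hr, hv⟩ := hc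
  exact ⟨z, z', Relation.ReflTransGen.trans h hr, hv⟩

lemma vis_choice {a b μ x} (h : Vis (choice a b) μ x) : Vis a μ x ∨ Vis b μ x := by
  cases h with
  | r9l _ h => exact Or.inl h
  | r9r _ h => exact Or.inr h

lemma red_choice {a b x} (h : Red s (choice a b) x) :
    (∃ a', Red s a a' ∧ x = choice a' b) ∨ (∃ b', Red s b b' ∧ x = choice a b') := by
  cases h with
  | r8l _ h => exact Or.inl ⟨_, h, rfl⟩
  | r8r _ h => exact Or.inr ⟨_, h, rfl⟩

/-- Lifting a tick path of `a ∥ b` to `(a + κ) ∥ b`. -/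
lemma cantick_lift_aux : ∀ {x z z'}, Reds s x z → Vis z Label.tick z' →
    ∀ a b κ, x = par a b → CanTick s (par (choice a κ) b) := by
  intro x z z' hr
  induction hr using Relation.ReflTransGen.head_induction_on with
  | refl =>
    intro hv a b κ hx; subst hx
    cases hv with
    | r11l _ _ hne => exact absurd rfl hne
    | r11r _ _ hne => exact absurd rfl hne
    | r12 h1 h2 => exact ⟨_, _, Relation.ReflTransGen.refl, Vis.r12 (Vis.r9l _ h1) h2⟩
  | head hstep hrest ih =>
    intro hv a b κ hx; subst hx
    cases hstep with
    | r10l _ h => exact CanTick.of_red (Red.r10l _ (Red.r8l _ h)) (ih hv _ _ κ rfl)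
    | r10r _ h => exact CanTick.of_red (Red.r10r _ h) (ih hv _ _ κ rfl)
    | r13l h1 h2 => exact CanTick.of_red (Red.r13l (Vis.r9l _ h1) h2) ⟨_, _, hrest, hv⟩
    | r13r h1 h2 => exact CanTick.of_red (Red.r13r (Vis.r9l _ h1) h2) ⟨_, _, hrest, hv⟩
    | r14l h1 h2 hs => exact CanTick.of_red (Red.r14l (Vis.r9l _ h1) h2 hs) ⟨_, _, hrest, hv⟩
    | r14r h1 h2 hs => exact CanTick.of_red (Red.r14r (Vis.r9l _ h1) h2 hs) ⟨_, _, hrest, hv⟩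
    | r15l h1 h2 hs => cases reds_fail_eq hrest; exact absurd hv not_vis_fail
    | r15r h1 h2 hs => cases reds_fail_eq hrest; exact absurd hv not_vis_fail

lemma cantick_choice_left {a b κ} (h : CanTick s (par a b)) :
    CanTick s (par (choice a κ) b) := by
  obtain ⟨z, z', hr, hv⟩ := h
  exact cantick_lift_aux hr hv a b κ rfl

/-- Completeness of `a ∥ b` lifts to `(a + fail) ∥ b`. -/
lemma complete_choice_fail {a b} (h : CompleteP s (par a b)) :
    CompleteP s (par (choice a SessionType.fail) b) := by
  have inv : ∀ z, Reds s (par (choice a SessionType.fail) b) z →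
      (∃ a' b', z = par (choice a' SessionType.fail) b' ∧ Reds s (par a b) (par a' b')) ∨
      Reds s (par a b) z := by
    intro z hz
    induction hz with
    | refl => exact Or.inl ⟨a, b, rfl, Relation.ReflTransGen.refl⟩
    | tail _ hstep ih =>
      rcases ih with ⟨a', b', rfl, hab⟩ | hab
      · cases hstep with
        | r10l _ h =>
          rcases red_choice h with ⟨a'', h', rfl⟩ | ⟨b'', h', rfl⟩
          · exact Or.inl ⟨a'', b', rfl, Relation.ReflTransGen.tail hab (Red.r10l _ h')⟩
          · exact absurd h' not_red_fail
        | r10r _ h => exact Or.inl ⟨a', _, rfl, Relation.ReflTransGen.tail hab (Red.r10r _ h)⟩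
        | r13l h1 h2 =>
          rcases vis_choice h1 with h1 | h1
          · exact Or.inr (Relation.ReflTransGen.tail hab (Red.r13l h1 h2))
          · exact absurd h1 not_vis_fail
        | r13r h1 h2 =>
          rcases vis_choice h1 with h1 | h1
          · exact Or.inr (Relation.ReflTransGen.tail hab (Red.r13r h1 h2))
          · exact absurd h1 not_vis_fail
        | r14l h1 h2 hs =>
          rcases vis_choice h1 with h1 | h1
          · exact Or.inr (Relation.ReflTransGen.tail hab (Red.r14l h1 h2 hs))
          · exact absurd h1 not_vis_fail
        | r14r h1 h2 hs =>
          rcases vis_choice h1 with h1 | h1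
          · exact Or.inr (Relation.ReflTransGen.tail hab (Red.r14r h1 h2 hs))
          · exact absurd h1 not_vis_fail
        | r15l h1 h2 hs =>
          rcases vis_choice h1 with h1 | h1
          · exact Or.inr (Relation.ReflTransGen.tail hab (Red.r15l h1 h2 hs))
          · exact absurd h1 not_vis_fail
        | r15r h1 h2 hs =>
          rcases vis_choice h1 with h1 | h1
          · exact Or.inr (Relation.ReflTransGen.tail hab (Red.r15r h1 h2 hs))
          · exact absurd h1 not_vis_fail
      · exact Or.inr (Relation.ReflTransGen.tail hab hstep)
  intro z hz
  rcases inv z hz with ⟨a', b', rfl, hab⟩ | hab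
  · exact cantick_choice_left (h _ hab)
  · exact h z hab

/-- A tick path of `(a + ρ) ∥ b` either ticks through `a` or through `ρ`. -/
lemma dichotomy_aux : ∀ {x z z'}, Reds s x z → Vis z Label.tick z' →
    ∀ a ρ b, x = par (choice a ρ) b →
    CanTick s (par a b) ∨ CanTick s (par (choice SessionType.fail ρ) b) := by
  intro x z z' hr
  induction hr using Relation.ReflTransGen.head_induction_on with
  | refl =>
    intro hv a ρ b hx; subst hx
    cases hv with
    | r11l _ _ hne => exact absurd rfl hne
    | r11r _ _ hne => exact absurd rfl hne
    | r12 h1 h2 =>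
      rcases vis_choice h1 with h1 | h1
      · exact Or.inl ⟨_, _, Relation.ReflTransGen.refl, Vis.r12 h1 h2⟩
      · exact Or.inr ⟨_, _, Relation.ReflTransGen.refl, Vis.r12 (Vis.r9r _ h1) h2⟩
  | head hstep hrest ih =>
    intro hv a ρ b hx; subst hx
    cases hstep with
    | r10l _ h =>
      rcases red_choice h with ⟨a', h', rfl⟩ | ⟨ρ', h', rfl⟩
      · rcases ih hv a' ρ b rfl with hl | hr'
        · exact Or.inl (CanTick.of_red (Red.r10l _ h') hl)
        · exact Or.inr hr'
      · rcases ih hv a ρ' b rfl with hl | hr'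
        · exact Or.inl hl
        · exact Or.inr (CanTick.of_red (Red.r10l _ (Red.r8r _ h')) hr')
    | r10r _ h =>
      rcases ih hv a ρ _ rfl with hl | hr'
      · exact Or.inl (CanTick.of_red (Red.r10r _ h) hl)
      · exact Or.inr (CanTick.of_red (Red.r10r _ h) hr')
    | r13l h1 h2 =>
      rcases vis_choice h1 with h1 | h1
      · exact Or.inl (CanTick.of_red (Red.r13l h1 h2) ⟨_, _, hrest, hv⟩)
      · exact Or.inr (CanTick.of_red (Red.r13l (Vis.r9r _ h1) h2) ⟨_, _, hrest, hv⟩)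
    | r13r h1 h2 =>
      rcases vis_choice h1 with h1 | h1
      · exact Or.inl (CanTick.of_red (Red.r13r h1 h2) ⟨_, _, hrest, hv⟩)
      · exact Or.inr (CanTick.of_red (Red.r13r (Vis.r9r _ h1) h2) ⟨_, _, hrest, hv⟩)
    | r14l h1 h2 hs =>
      rcases vis_choice h1 with h1 | h1
      · exact Or.inl (CanTick.of_red (Red.r14l h1 h2 hs) ⟨_, _, hrest, hv⟩)
      · exact Or.inr (CanTick.of_red (Red.r14l (Vis.r9r _ h1) h2 hs) ⟨_, _, hrest, hv⟩)
    | r14r h1 h2 hs =>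
      rcases vis_choice h1 with h1 | h1
      · exact Or.inl (CanTick.of_red (Red.r14r h1 h2 hs) ⟨_, _, hrest, hv⟩)
      · exact Or.inr (CanTick.of_red (Red.r14r (Vis.r9r _ h1) h2 hs) ⟨_, _, hrest, hv⟩)
    | r15l h1 h2 hs => cases reds_fail_eq hrest; exact absurd hv not_vis_fail
    | r15r h1 h2 hs => cases reds_fail_eq hrest; exact absurd hv not_vis_fail

lemma dichotomy {a ρ b} (h : CanTick s (par (choice a ρ) b)) :
    CanTick s (par a b) ∨ CanTick s (par (choice SessionType.fail ρ) b) := by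
  obtain ⟨z, z', hr, hv⟩ := h
  exact dichotomy_aux hr hv a ρ b rfl

/-- If `(a + ρ) ∥ b` is complete but `(0 + ρ) ∥ b` cannot tick, then `a ∥ b` is complete. -/
lemma key_lemma {a ρ b} (hC : CompleteP s (par (choice a ρ) b))
    (hN : ¬ CanTick s (par (choice SessionType.fail ρ) b)) : CompleteP s (par a b) := by
  have inv : ∀ z, Reds s (par a b) z →
      (∃ a' b', z = par a' b' ∧ Reds s (par (choice a ρ) b) (par (choice a' ρ) b')
        ∧ Reds s (par (choice SessionType.fail ρ) b) (par (choice SessionType.fail ρ) b'))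
      ∨ Reds s (par (choice a ρ) b) z := by
    intro z hz
    induction hz with
    | refl => exact Or.inl ⟨a, b, rfl, Relation.ReflTransGen.refl, Relation.ReflTransGen.refl⟩
    | tail _ hstep ih =>
      rcases ih with ⟨a', b', rfl, h1, h2⟩ | h1
      · cases hstep with
        | r10l _ h =>
          exact Or.inl ⟨_, b', rfl,
            Relation.ReflTransGen.tail h1 (Red.r10l _ (Red.r8l _ h)), h2⟩
        | r10r _ h =>
          exact Or.inl ⟨a', _, rfl, Relation.ReflTransGen.tail h1 (Red.r10r _ h),
            Relation.ReflTransGen.tail h2 (Red.r10r _ h)⟩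
        | r13l h1' h2' => exact Or.inr (Relation.ReflTransGen.tail h1 (Red.r13l (Vis.r9l _ h1') h2'))
        | r13r h1' h2' => exact Or.inr (Relation.ReflTransGen.tail h1 (Red.r13r (Vis.r9l _ h1') h2'))
        | r14l h1' h2' hs => exact Or.inr (Relation.ReflTransGen.tail h1 (Red.r14l (Vis.r9l _ h1') h2' hs))
        | r14r h1' h2' hs => exact Or.inr (Relation.ReflTransGen.tail h1 (Red.r14r (Vis.r9l _ h1') h2' hs))
        | r15l h1' h2' hs => exact Or.inr (Relation.ReflTransGen.tail h1 (Red.r15l (Vis.r9l _ h1') h2' hs))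
        | r15r h1' h2' hs => exact Or.inr (Relation.ReflTransGen.tail h1 (Red.r15r (Vis.r9l _ h1') h2' hs))
      · exact Or.inr (Relation.ReflTransGen.tail h1 hstep)
  intro z hz
  rcases inv z hz with ⟨a', b', rfl, h1, h2⟩ | h1
  · rcases dichotomy (hC _ h1) with hl | hr'
    · exact hl
    · exact absurd (CanTick.of_reds h2 hr') hN
  · exact hC z h1

end Aux

theorem not_viable_iff_ssub_fail (η : SessionType) :
    ¬ Viable η ↔ SSub η SessionType.fail := by
  constructor
  · -- not viable → η ⊑ 0
    intro hNV ρ σ hC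
    have inv : ∀ z, Reds SubRel (par (choice SessionType.fail ρ) σ) z →
        (∃ ρ' σ', z = par (choice SessionType.fail ρ') σ' ∧
          Reds SubRel (par (choice η ρ) σ) (par (choice η ρ') σ'))
        ∨ Reds SubRel (par (choice η ρ) σ) z := by
      intro z hz
      induction hz with
      | refl => exact Or.inl ⟨ρ, σ, rfl, Relation.ReflTransGen.refl⟩
      | tail _ hstep ih =>
        rcases ih with ⟨ρ', σ', rfl, h1⟩ | h1
        · cases hstep with
          | r10l _ h =>
            rcases red_choice h with ⟨a'', h', rfl⟩ | ⟨ρ'', h', rfl⟩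
            · exact absurd h' not_red_fail
            · exact Or.inl ⟨ρ'', σ', rfl,
                Relation.ReflTransGen.tail h1 (Red.r10l _ (Red.r8r _ h'))⟩
          | r10r _ h => exact Or.inl ⟨ρ', _, rfl, Relation.ReflTransGen.tail h1 (Red.r10r _ h)⟩
          | r13l h1' h2' =>
            rcases vis_choice h1' with h1' | h1'
            · exact absurd h1' not_vis_fail
            · exact Or.inr (Relation.ReflTransGen.tail h1 (Red.r13l (Vis.r9r _ h1') h2'))
          | r13r h1' h2' =>
            rcases vis_choice h1' with h1' | h1'
            · exact absurd h1' not_vis_fail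
            · exact Or.inr (Relation.ReflTransGen.tail h1 (Red.r13r (Vis.r9r _ h1') h2'))
          | r14l h1' h2' hs =>
            rcases vis_choice h1' with h1' | h1'
            · exact absurd h1' not_vis_fail
            · exact Or.inr (Relation.ReflTransGen.tail h1 (Red.r14l (Vis.r9r _ h1') h2' hs))
          | r14r h1' h2' hs =>
            rcases vis_choice h1' with h1' | h1'
            · exact absurd h1' not_vis_fail
            · exact Or.inr (Relation.ReflTransGen.tail h1 (Red.r14r (Vis.r9r _ h1') h2' hs))
          | r15l h1' h2' hs =>
            rcases vis_choice h1' with h1' | h1'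
            · exact absurd h1' not_vis_fail
            · exact Or.inr (Relation.ReflTransGen.tail h1 (Red.r15l (Vis.r9r _ h1') h2' hs))
          | r15r h1' h2' hs =>
            rcases vis_choice h1' with h1' | h1'
            · exact absurd h1' not_vis_fail
            · exact Or.inr (Relation.ReflTransGen.tail h1 (Red.r15r (Vis.r9r _ h1') h2' hs))
        · exact Or.inr (Relation.ReflTransGen.tail h1 hstep)
    intro z hz
    rcases inv z hz with ⟨ρ', σ', rfl, h1⟩ | h1
    · by_contra hN
      exact hNV ⟨σ', key_lemma (fun w hw => hC w (Relation.ReflTransGen.trans h1 hw)) hN⟩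
    · exact hC z h1
  · -- η ⊑ 0 → not viable
    intro h
    rintro ⟨ρ₀, hc⟩
    have h1 : CompleteP SubRel (par (choice η SessionType.fail) ρ₀) := complete_choice_fail hc
    have h2 : CompleteP SubRel (par (choice SessionType.fail SessionType.fail) ρ₀) :=
      h SessionType.fail ρ₀ h1
    obtain ⟨z, z', hr, hv⟩ := h2 _ Relation.ReflTransGen.refl
    have shape : ∀ z, Reds SubRel (par (choice SessionType.fail SessionType.fail) ρ₀) z →
        ∃ τ, z = par (choice SessionType.fail SessionType.fail) τ := by
      intro z hz
      induction hz with
      | refl => exact ⟨ρ₀, rfl⟩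
      | tail _ hstep ih =>
        obtain ⟨τ, rfl⟩ := ih
        cases hstep with
        | r10l _ h' =>
          rcases red_choice h' with ⟨_, h'', _⟩ | ⟨_, h'', _⟩ <;> exact absurd h'' not_red_fail
        | r10r _ h' => exact ⟨_, rfl⟩
        | r13l h1' h2' => rcases vis_choice h1' with h1' | h1' <;> exact absurd h1' not_vis_fail
        | r13r h1' h2' => rcases vis_choice h1' with h1' | h1' <;> exact absurd h1' not_vis_fail
        | r14l h1' h2' hs => rcases vis_choice h1' with h1' | h1' <;> exact absurd h1' not_vis_fail
        | r14r h1' h2' hs => rcases vis_choice h1' with h1' | h1' <;> exact absurd h1' not_vis_fail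
        | r15l h1' h2' hs => rcases vis_choice h1' with h1' | h1' <;> exact absurd h1' not_vis_fail
        | r15r h1' h2' hs => rcases vis_choice h1' with h1' | h1' <;> exact absurd h1' not_vis_fail
    obtain ⟨τ, rfl⟩ := shape z hr
    cases hv with
    | r11l _ h' hne => rcases vis_choice h' with h' | h' <;> exact absurd h' not_vis_fail
    | r11r _ h' hne => exact absurd rfl hne
    | r12 h1' h2' => rcases vis_choice h1' with h1' | h1' <;> exact absurd h1' not_vis_fail
end

section
/- A session type η is complete if and only if 1 + η ⊑ η, where ⊑ is the strong subsession relation. -/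
open SessionType

/-!
A run of `(η + ρ) ∥ σ` is mirrored by `((1 + η) + ρ) ∥ σ`: the extra branch `1` offers only
✓, which never takes part in a synchronisation, so the two runs agree until ✓ is performed.
A ✓ performed through `1` is replaced, by completeness of `η`, by a weak ✓ of the current
reduct of `η`. Conversely, in the context `· + 0` against the partner `1`, the type
`(1 + η) + 0` passes the test, while `η + 0` passes it exactly when `η` is complete.
-/

open SessionType Relation

section

variable {sub : SessionType → SessionType → Prop}

lemma reds_succ_iff {X : SessionType} : Reds sub succ X ↔ X = succ :=
  reflTransGen_iff_eq fun _ h => nomatch h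

lemma reds_fail_iff {X : SessionType} : Reds sub fail X ↔ X = fail :=
  reflTransGen_iff_eq fun _ h => nomatch h

lemma reds_choice {a a' b b' : SessionType} (ha : Reds sub a a') (hb : Reds sub b b') :
    Reds sub (choice a b) (choice a' b') :=
  (ha.lift (choice · b) fun _ _ h => Red.r8l _ h).trans
    (hb.lift (choice a' ·) fun _ _ h => Red.r8r _ h)

lemma reds_par {a a' b b' : SessionType} (ha : Reds sub a a') (hb : Reds sub b b') :
    Reds sub (par a b) (par a' b') :=
  (ha.lift (par · b) fun _ _ h => Red.r10l _ h).trans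
    (hb.lift (par a' ·) fun _ _ h => Red.r10r _ h)

lemma exists_of_reds_choice {a b X : SessionType} (h : Reds sub (choice a b) X) :
    ∃ a' b', X = choice a' b' ∧ Reds sub a a' ∧ Reds sub b b' := by
  induction h with
  | refl => exact ⟨a, b, rfl, .refl, .refl⟩
  | tail _ step ih =>
    obtain ⟨a', b', rfl, ha, hb⟩ := ih
    cases step with
    | r8l _ h => exact ⟨_, b', rfl, ha.tail h, hb⟩
    | r8r _ h => exact ⟨a', _, rfl, ha, hb.tail h⟩

lemma exists_of_reds_choice_choice_succ {a b X : SessionType}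
    (h : Reds sub (choice (choice succ a) b) X) :
    ∃ a' b', X = choice (choice succ a') b' ∧ Reds sub a a' ∧ Reds sub b b' := by
  obtain ⟨c, b', rfl, hc, hb⟩ := exists_of_reds_choice h
  obtain ⟨s, a', rfl, hs, ha⟩ := exists_of_reds_choice hc
  obtain rfl := reds_succ_iff.1 hs
  exact ⟨a', b', rfl, ha, hb⟩

lemma vis_choice_choice_succ_iff {a b K : SessionType} {μ : Label} :
    Vis (choice (choice succ a) b) μ K ↔
      (μ = Label.tick ∧ K = succ) ∨ Vis (choice a b) μ K := by
  constructor
  · intro h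
    cases h with
    | r9l _ h =>
      cases h with
      | r9l _ h => cases h; exact .inl ⟨rfl, rfl⟩
      | r9r _ h => exact .inr (.r9l _ h)
    | r9r _ h => exact .inr (.r9r _ h)
  · rintro (⟨rfl, rfl⟩ | h)
    · exact .r9l _ (.r9l _ .r1)
    · cases h with
      | r9l _ h => exact .r9l _ (.r9r _ h)
      | r9r _ h => exact .r9r _ h

lemma vis_par_tick {α γ K : SessionType} (h : Vis (par α γ) Label.tick K) :
    ∃ α' γ', Vis α Label.tick α' ∧ Vis γ Label.tick γ' := by
  cases h with
  | r11l _ _ hne => exact absurd rfl hne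
  | r11r _ _ hne => exact absurd rfl hne
  | r12 hα hγ => exact ⟨_, _, hα, hγ⟩

def VisNonTickLE (β α : SessionType) : Prop :=
  ∀ μ K, μ ≠ Label.tick → Vis β μ K → Vis α μ K

lemma red_par_cases {α γ Y : SessionType} (h : Red sub (par α γ) Y) :
    (∃ α', Red sub α α' ∧ Y = par α' γ) ∨ (∃ γ', Red sub γ γ' ∧ Y = par α γ') ∨
      ∀ β, VisNonTickLE α β → Red sub (par β γ) Y := by
  cases h with
  | r10l _ h => exact .inl ⟨_, h, rfl⟩
  | r10r _ h => exact .inr (.inl ⟨_, h, rfl⟩)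
  | r13l hv hw => exact .inr (.inr fun β hβ => .r13l (hβ _ _ nofun hv) hw)
  | r13r hv hw => exact .inr (.inr fun β hβ => .r13r (hβ _ _ nofun hv) hw)
  | r14l hv hw hs => exact .inr (.inr fun β hβ => .r14l (hβ _ _ nofun hv) hw hs)
  | r14r hv hw hs => exact .inr (.inr fun β hβ => .r14r (hβ _ _ nofun hv) hw hs)
  | r15l hv hw hs => exact .inr (.inr fun β hβ => .r15l (hβ _ _ nofun hv) hw hs)
  | r15r hv hw hs => exact .inr (.inr fun β hβ => .r15r (hβ _ _ nofun hv) hw hs)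

/-- A run of `α ∥ γ` either moves the two components separately, or from some point on only
depends on the non-✓ actions of `α`'s current state. -/
lemma reds_par_cases {α γ X : SessionType} (h : Reds sub (par α γ) X) :
    (∃ α' γ', X = par α' γ' ∧ Reds sub α α' ∧ Reds sub γ γ') ∨
      ∃ α' γ', Reds sub α α' ∧ Reds sub γ γ' ∧
        ∀ β, VisNonTickLE α' β → Reds sub (par β γ') X := by
  induction h with
  | refl => exact .inl ⟨α, γ, rfl, .refl, .refl⟩
  | tail _ step ih =>
    rcases ih with ⟨α', γ', rfl, hα, hγ⟩ | ⟨α', γ', hα, hγ, hsync⟩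
    · rcases red_par_cases step with ⟨α'', h, rfl⟩ | ⟨γ'', h, rfl⟩ | hsync
      · exact .inl ⟨α'', γ', rfl, hα.tail h, hγ⟩
      · exact .inl ⟨α', γ'', rfl, hα, hγ.tail h⟩
      · exact .inr ⟨α', γ', hα, hγ, fun β hβ => .single (hsync β hβ)⟩
    · exact .inr ⟨α', γ', hα, hγ, fun β hβ => (hsync β hβ).tail step⟩

lemma canTick_of_reds {α α' : SessionType} (h : Reds sub α α') (ht : CanTick sub α') :
    CanTick sub α := by
  obtain ⟨β, K, hβ, hK⟩ := ht
  exact ⟨β, K, h.trans hβ, hK⟩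

lemma canTick_par {α γ γ' : SessionType} (hα : CanTick sub α) (hγ : Vis γ Label.tick γ') :
    CanTick sub (par α γ) := by
  obtain ⟨β, K, hβ, hK⟩ := hα
  exact ⟨_, _, reds_par hβ .refl, .r12 hK hγ⟩

lemma canTick_choice_left {a b : SessionType} (h : CanTick sub a) :
    CanTick sub (choice a b) := by
  obtain ⟨a', K, ha, hK⟩ := h
  exact ⟨_, K, reds_choice ha .refl, .r9l _ hK⟩

lemma completeP_apply_iff (f : SessionType → SessionType) {a : SessionType}
    (hf : ∀ {a a'}, Reds sub a a' → Reds sub (f a) (f a'))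
    (hf_inv : ∀ {a X}, Reds sub (f a) X → ∃ a', X = f a' ∧ Reds sub a a')
    (htick : ∀ {a}, CanTick sub (f a) ↔ CanTick sub a) :
    CompleteP sub (f a) ↔ CompleteP sub a := by
  constructor
  · exact fun h a' ha' => htick.1 (h _ (hf ha'))
  · intro h X hX
    obtain ⟨a', rfl, ha'⟩ := hf_inv hX
    exact htick.2 (h a' ha')

lemma exists_of_reds_par_succ {α X : SessionType} (h : Reds sub (par α succ) X) :
    ∃ α', X = par α' succ ∧ Reds sub α α' := by
  induction h with
  | refl => exact ⟨α, rfl, .refl⟩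
  | tail _ step ih =>
    obtain ⟨α', rfl, hα⟩ := ih
    cases step with
    | r10l _ h => exact ⟨_, rfl, hα.tail h⟩
    | r10r _ h => cases h
    | r13l _ hw | r13r _ hw | r14l _ hw _ | r14r _ hw _ | r15l _ hw _ | r15r _ hw _ => cases hw

lemma canTick_par_succ_iff {α : SessionType} : CanTick sub (par α succ) ↔ CanTick sub α := by
  refine ⟨fun ⟨Z, K, hZ, hK⟩ => ?_, fun h => canTick_par h .r1⟩
  obtain ⟨α', rfl, hα'⟩ := exists_of_reds_par_succ hZ
  obtain ⟨K', -, hK', -⟩ := vis_par_tick hK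
  exact ⟨α', K', hα', hK'⟩

lemma completeP_par_succ_iff {α : SessionType} :
    CompleteP sub (par α succ) ↔ CompleteP sub α :=
  completeP_apply_iff (par · succ) (reds_par · .refl)
    exists_of_reds_par_succ canTick_par_succ_iff

lemma exists_of_reds_choice_fail {a X : SessionType} (h : Reds sub (choice a fail) X) :
    ∃ a', X = choice a' fail ∧ Reds sub a a' := by
  obtain ⟨a', f, rfl, ha', hf⟩ := exists_of_reds_choice h
  obtain rfl := reds_fail_iff.1 hf
  exact ⟨a', rfl, ha'⟩

lemma canTick_choice_fail_iff {a : SessionType} :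
    CanTick sub (choice a fail) ↔ CanTick sub a := by
  refine ⟨fun ⟨Z, K, hZ, hK⟩ => ?_, canTick_choice_left⟩
  obtain ⟨a', rfl, ha'⟩ := exists_of_reds_choice_fail hZ
  cases hK with
  | r9l _ hK => exact ⟨a', K, ha', hK⟩
  | r9r _ hK => cases hK

lemma completeP_choice_fail_iff {a : SessionType} :
    CompleteP sub (choice a fail) ↔ CompleteP sub a :=
  completeP_apply_iff (choice · fail) (reds_choice · .refl)
    exists_of_reds_choice_fail canTick_choice_fail_iff

lemma completeP_choice_succ {a : SessionType} : CompleteP sub (choice succ a) := by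
  intro X hX
  obtain ⟨s, a', rfl, hs, -⟩ := exists_of_reds_choice hX
  obtain rfl := reds_succ_iff.1 hs
  exact ⟨_, _, .refl, .r9l _ .r1⟩

lemma visNonTickLE_choice_of_choice_succ {a b : SessionType} :
    VisNonTickLE (choice (choice succ a) b) (choice a b) := fun _ _ hμ h =>
  (vis_choice_choice_succ_iff.1 h).resolve_left fun h' => hμ h'.1

lemma visNonTickLE_choice_succ_of_choice {a b : SessionType} :
    VisNonTickLE (choice a b) (choice (choice succ a) b) := fun _ _ _ h =>
  vis_choice_choice_succ_iff.2 (.inr h)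

lemma canTick_of_canTick_choice_succ {η η' ρ σ : SessionType} (hη : CompleteP sub η)
    (hη' : Reds sub η η') (h : CanTick sub (par (choice (choice succ η') ρ) σ)) :
    CanTick sub (par (choice η' ρ) σ) := by
  obtain ⟨Z, K, hZ, hK⟩ := h
  rcases reds_par_cases hZ with ⟨α, γ, rfl, hα, hγ⟩ | ⟨α, γ, hα, hγ, hsync⟩
  · obtain ⟨η'', ρ', rfl, hη'', hρ'⟩ := exists_of_reds_choice_choice_succ hα
    obtain ⟨_, _, hleft, hright⟩ := vis_par_tick hK
    have hleft' : CanTick sub (choice η'' ρ') := by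
      rcases vis_choice_choice_succ_iff.1 hleft with ⟨-, rfl⟩ | h
      · exact canTick_choice_left (hη _ (hη'.trans hη''))
      · exact ⟨_, _, .refl, h⟩
    exact canTick_of_reds (reds_par (reds_choice hη'' hρ') hγ) (canTick_par hleft' hright)
  · obtain ⟨η'', ρ', rfl, hη'', hρ'⟩ := exists_of_reds_choice_choice_succ hα
    exact ⟨Z, K, (reds_par (reds_choice hη'' hρ') hγ).trans
      (hsync _ visNonTickLE_choice_of_choice_succ), hK⟩

lemma preceqP_choice_choice_succ {η : SessionType} (hη : CompleteP sub η) (ρ : SessionType) :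
    PreceqP sub (choice (choice succ η) ρ) (choice η ρ) := by
  intro σ hσ X hX
  rcases reds_par_cases hX with ⟨α, γ, rfl, hα, hγ⟩ | ⟨α, γ, hα, hγ, hsync⟩
  · obtain ⟨η', ρ', rfl, hη', hρ'⟩ := exists_of_reds_choice hα
    exact canTick_of_canTick_choice_succ hη hη'
      (hσ _ (reds_par (reds_choice (reds_choice .refl hη') hρ') hγ))
  · obtain ⟨η', ρ', rfl, hη', hρ'⟩ := exists_of_reds_choice hα
    exact hσ X ((reds_par (reds_choice (reds_choice .refl hη') hρ') hγ).trans
      (hsync _ visNonTickLE_choice_succ_of_choice))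

lemma completeP_of_preceqP_choice_choice_succ {η : SessionType}
    (h : PreceqP sub (choice (choice succ η) fail) (choice η fail)) : CompleteP sub η :=
  completeP_choice_fail_iff.1 <| completeP_par_succ_iff.1 <|
    h succ (completeP_par_succ_iff.2 (completeP_choice_fail_iff.2 completeP_choice_succ))

end

theorem complete_iff_ssub (η : SessionType) :
    SComplete η ↔ SSub (SessionType.choice SessionType.succ η) η := by
  refine ⟨preceqP_choice_choice_succ, fun h => ?_⟩
  exact completeP_of_preceqP_choice_choice_succ (h fail)
end

section
/- Strong subsession is not a superset of external-choice widening: it is not the case that ?Int.1 ⊑ ?Int.1 + ?Bool.1. In particular, the test ρ = !Int.1 + !Bool.0 completes ?Int.1 | ρ but not (?Int.1 + ?Bool.1) | ρ. -/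
open SessionType

open SessionType

abbrev ρ0 : SessionType :=
  choice (outV tInt succ) (outV tBool SessionType.fail)

def LeftOK (A : SessionType) : Prop :=
  (∀ sub X, ¬ Red sub A X) ∧
  (∀ μ A', Vis A μ A' → ∃ n : ℤ, μ = Label.inV (Sum.inl n) ∧ A' = succ) ∧
  (∀ n : ℤ, Vis A (Label.inV (Sum.inl n)) succ)

lemma leftOK_inInt : LeftOK (inV tInt succ) := by
  refine ⟨?_, ?_, ?_⟩
  · intro sub X h; cases h
  · intro μ A' h
    cases h with
    | r7 _ hv => rcases hv with ⟨n, rfl⟩; exact ⟨n, rfl, rfl⟩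
  · intro n; exact Vis.r7 _ ⟨n, rfl⟩

lemma vis_outV_inv {t : VType} {η : SessionType} {μ : Label} {η' : SessionType}
    (h : Vis (outV t η) μ η') : ∃ v, t = {v} ∧ μ = Label.outV v ∧ η' = η := by
  cases h; exact ⟨_, rfl, rfl, rfl⟩

lemma red_outV_inv {sub} {t : VType} {η X : SessionType} (h : Red sub (outV t η) X) :
    ∃ v, v ∈ t ∧ X = outV {v} η := by
  cases h with
  | r6 _ hv => exact ⟨_, hv, rfl⟩

lemma tInt_ne_singleton (v : Value) : tInt ≠ {v} := by
  intro h
  have h0 : (Sum.inl 0 : Value) ∈ tInt := ⟨0, rfl⟩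
  have h1 : (Sum.inl 1 : Value) ∈ tInt := ⟨1, rfl⟩
  rw [h, Set.mem_singleton_iff] at h0 h1
  rw [← h1] at h0; exact absurd (Sum.inl.inj h0) (by norm_num)

lemma tBool_ne_singleton (v : Value) : tBool ≠ {v} := by
  intro h
  have h0 : (Sum.inr false : Value) ∈ tBool := ⟨false, rfl⟩
  have h1 : (Sum.inr true : Value) ∈ tBool := ⟨true, rfl⟩
  rw [h, Set.mem_singleton_iff] at h0 h1
  rw [← h1] at h0; exact absurd (Sum.inr.inj h0) (by simp)

def RightOK (B : SessionType) : Prop :=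
  ∃ β γ, B = choice β γ ∧
    (β = outV tInt succ ∨ ∃ n : ℤ, β = outV {Sum.inl n} succ) ∧
    (γ = outV tBool SessionType.fail ∨ ∃ b : Bool, γ = outV {Sum.inr b} SessionType.fail)

def StInv (A : SessionType) (X : SessionType) : Prop :=
  (∃ B, X = par A B ∧ RightOK B) ∨ X = par succ succ

lemma inv_closed {sub A X Y} (hA : LeftOK A) (hX : StInv A X) (hR : Red sub X Y) :
    StInv A Y := by
  obtain ⟨hA1, hA2, hA3⟩ := hA
  rcases hX with ⟨B, rfl, β, γ, rfl, hβ, hγ⟩ | rfl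
  · cases hR with
    | r10l _ h => exact absurd h (hA1 _ _)
    | r10r _ h =>
      cases h with
      | r8l _ h =>
        rcases hβ with rfl | ⟨n, rfl⟩ <;> obtain ⟨v, hv, rfl⟩ := red_outV_inv h
        · rcases hv with ⟨n, rfl⟩
          exact Or.inl ⟨_, rfl, _, _, rfl, Or.inr ⟨n, rfl⟩, hγ⟩
        · rw [Set.mem_singleton_iff] at hv; subst hv
          exact Or.inl ⟨_, rfl, _, _, rfl, Or.inr ⟨n, rfl⟩, hγ⟩
      | r8r _ h =>
        rcases hγ with rfl | ⟨b, rfl⟩ <;> obtain ⟨v, hv, rfl⟩ := red_outV_inv h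
        · rcases hv with ⟨b, rfl⟩
          exact Or.inl ⟨_, rfl, _, _, rfl, hβ, Or.inr ⟨b, rfl⟩⟩
        · rw [Set.mem_singleton_iff] at hv; subst hv
          exact Or.inl ⟨_, rfl, _, _, rfl, hβ, Or.inr ⟨b, rfl⟩⟩
    | r13l h _ => obtain ⟨n, hn, _⟩ := hA2 _ _ h; cases hn
    | r13r h h' =>
      obtain ⟨n, hn, rfl⟩ := hA2 _ _ h
      cases hn
      cases h' with
      | r9l _ h' =>
        rcases hβ with rfl | ⟨m, rfl⟩ <;>
          obtain ⟨v, hveq, hμ, rfl⟩ := vis_outV_inv h'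
        · exact absurd hveq (tInt_ne_singleton v)
        · exact Or.inr rfl
      | r9r _ h' =>
        rcases hγ with rfl | ⟨b, rfl⟩ <;>
          obtain ⟨v, hveq, hμ, rfl⟩ := vis_outV_inv h'
        · exact absurd hveq (tBool_ne_singleton v)
        · cases hμ
          rw [Set.singleton_eq_singleton_iff] at hveq
          cases hveq
    | r14l h _ _ => obtain ⟨n, hn, _⟩ := hA2 _ _ h; cases hn
    | r14r h _ _ => obtain ⟨n, hn, _⟩ := hA2 _ _ h; cases hn
    | r15l h _ _ => obtain ⟨n, hn, _⟩ := hA2 _ _ h; cases hn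
    | r15r h _ _ => obtain ⟨n, hn, _⟩ := hA2 _ _ h; cases hn
  · cases hR with
    | r10l _ h => cases h
    | r10r _ h => cases h
    | r13l h _ => cases h
    | r13r h _ => cases h
    | r14l h _ _ => cases h
    | r14r h _ _ => cases h
    | r15l h _ _ => cases h
    | r15r h _ _ => cases h

lemma inv_canTick {sub A X} (hA : LeftOK A) (hX : StInv A X) : CanTick sub X := by
  obtain ⟨hA1, hA2, hA3⟩ := hA
  rcases hX with ⟨B, rfl, β, γ, rfl, hβ, hγ⟩ | rfl
  · obtain ⟨n, hstep⟩ : ∃ n : ℤ,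
        Reds sub (par A (choice β γ)) (par A (choice (outV {Sum.inl n} succ) γ)) := by
      rcases hβ with rfl | ⟨n, rfl⟩
      · exact ⟨0, Relation.ReflTransGen.single (Red.r10r _ (Red.r8l _ (Red.r6 _ ⟨0, rfl⟩)))⟩
      · exact ⟨n, Relation.ReflTransGen.refl⟩
    refine ⟨par succ succ, par succ succ, ?_, Vis.r12 Vis.r1 Vis.r1⟩
    exact hstep.trans (Relation.ReflTransGen.single
      (Red.r13r (hA3 n) (Vis.r9l _ (Vis.r3 _ _))))
  · exact ⟨_, _, Relation.ReflTransGen.refl, Vis.r12 Vis.r1 Vis.r1⟩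

lemma complete_of_leftOK {sub A} (hA : LeftOK A) : CompleteP sub (par A ρ0) := by
  intro X hX
  have hinv : StInv A X := by
    have h0 : StInv A (par A ρ0) := Or.inl ⟨_, rfl, _, _, rfl, Or.inl rfl, Or.inl rfl⟩
    induction hX with
    | refl => exact h0
    | tail _ h ih => exact inv_closed ⟨hA.1, hA.2.1, hA.2.2⟩ ih h
  exact inv_canTick hA hinv

-- incompleteness
lemma not_canTick_succ_fail {sub} : ¬ CanTick sub (par succ SessionType.fail) := by
  rintro ⟨η', η'', hreds, htick⟩
  have : η' = par succ SessionType.fail := by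
    clear htick
    induction hreds with
    | refl => rfl
    | tail _ h ih =>
      subst ih
      cases h with
      | r10l _ h => cases h
      | r10r _ h => cases h
      | r13l h _ => cases h
      | r13r _ h => cases h
      | r14l _ h _ => cases h
      | r14r _ h _ => cases h
      | r15l _ h _ => cases h
      | r15r _ h _ => cases h
  subst this
  cases htick with
  | r11l _ _ hne => exact hne rfl
  | r11r _ _ hne => exact hne rfl
  | r12 _ h => cases h

lemma incomplete_of_inBool {sub A} (h : Vis A (Label.inV (Sum.inr true)) succ) :
    ¬ CompleteP sub (par A ρ0) := by
  intro hc
  have hred : Reds sub (par A ρ0) (par succ SessionType.fail) := by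
    refine Relation.ReflTransGen.head
      (Red.r10r _ (Red.r8r _ (Red.r6 _ (⟨true, rfl⟩ : (Sum.inr true : Value) ∈ tBool))))
      (Relation.ReflTransGen.single ?_)
    exact Red.r13r h (Vis.r9r _ (Vis.r3 _ _))
  exact not_canTick_succ_fail (hc _ hred)

lemma leftOK_choice {A B : SessionType} (hA : LeftOK A) (hB : LeftOK B) :
    LeftOK (choice A B) := by
  refine ⟨?_, ?_, ?_⟩
  · intro sub X h
    cases h with
    | r8l _ h => exact hA.1 _ _ h
    | r8r _ h => exact hB.1 _ _ h
  · intro μ A' h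
    cases h with
    | r9l _ h => exact hA.2.1 _ _ h
    | r9r _ h => exact hB.2.1 _ _ h
  · intro n; exact Vis.r9l _ (hA.2.2 n)

theorem no_external_choice_widening :
    ¬ SSub (SessionType.inV tInt SessionType.succ)
        (SessionType.choice (SessionType.inV tInt SessionType.succ)
          (SessionType.inV tBool SessionType.succ)) ∧
    SComplete (SessionType.par (SessionType.inV tInt SessionType.succ)
      (SessionType.choice (SessionType.outV tInt SessionType.succ)
        (SessionType.outV tBool SessionType.fail))) ∧
    ¬ SComplete (SessionType.par
      (SessionType.choice (SessionType.inV tInt SessionType.succ)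
        (SessionType.inV tBool SessionType.succ))
      (SessionType.choice (SessionType.outV tInt SessionType.succ)
        (SessionType.outV tBool SessionType.fail))) := by
  refine ⟨?_, complete_of_leftOK leftOK_inInt, ?_⟩
  · intro h
    have h1 := h (inV tInt succ) ρ0
      (complete_of_leftOK (leftOK_choice leftOK_inInt leftOK_inInt))
    exact incomplete_of_inBool
      (Vis.r9l _ (Vis.r9r _ (Vis.r7 _ (⟨true, rfl⟩ : (Sum.inr true : Value) ∈ tBool)))) h1
  · exact incomplete_of_inBool (Vis.r9r _ (Vis.r7 _ (⟨true, rfl⟩ : (Sum.inr true : Value) ∈ tBool)))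
end

section
/- Input distributes over internal choice up to strong subsession equivalence: ?Int.η + ?Int.θ ≃ ?Int.(η ⊕ θ). -/
open SessionType

section DistribProof

open SessionType Relation

variable {sub : SessionType → SessionType → Prop}

private lemma canTick_of_reds_s13 {y y' : SessionType} (h : Reds sub y y')
    (h' : CanTick sub y') : CanTick sub y := by
  obtain ⟨a, b, h1, h2⟩ := h'
  exact ⟨a, b, Relation.ReflTransGen.trans h h1, h2⟩

/-- Forward weak simulation transfers `CanTick`. -/
private lemma fwd_sim (S : SessionType → SessionType → Prop)
    (hb : ∀ x y x', S x y → Red sub x x' → ∃ y', Reds sub y y' ∧ S x' y')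
    (ht : ∀ x y x₂, S x y → Vis x Label.tick x₂ → CanTick sub y) :
    ∀ x y, S x y → CanTick sub x → CanTick sub y := by
  intro x y hS hct
  obtain ⟨x₁, x₂, hred, htick⟩ := hct
  induction hred using Relation.ReflTransGen.head_induction_on generalizing y with
  | refl => exact ht _ _ _ hS htick
  | head hstep _ ih =>
      obtain ⟨y', hy', hS'⟩ := hb _ _ _ hS hstep
      exact canTick_of_reds_s13 hy' (ih _ hS')

/-- Backward simulation establishes completeness of `Y`. -/
private lemma bwd_sim (S : SessionType → SessionType → Prop) (X Y : SessionType)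
    (hXY : S X Y)
    (ha : ∀ x y y', S x y → Red sub y y' → ∃ x', Reds sub x x' ∧ S x' y')
    (hc : ∀ x y, Reds sub X x → S x y → CanTick sub y) :
    CompleteP sub Y := by
  intro y' hy'
  have : ∃ x, Reds sub X x ∧ S x y' := by
    induction hy' with
    | refl => exact ⟨X, Relation.ReflTransGen.refl, hXY⟩
    | tail _ hstep ih =>
        obtain ⟨x, hx, hS⟩ := ih
        obtain ⟨x', hx', hS'⟩ := ha _ _ _ hS hstep
        exact ⟨x', Relation.ReflTransGen.trans hx hx', hS'⟩
  obtain ⟨x, hx, hS⟩ := this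
  exact hc x y' hx hS

/-- The external-choice side `?Int.η + ?Int.θ`. -/
private def Ach (η θ : SessionType) : SessionType :=
  choice (inV tInt η) (inV tInt θ)

/-- The input-of-internal-choice side `?Int.(η ⊕ θ)`. -/
private def Bch (η θ : SessionType) : SessionType :=
  inV tInt (ichoice η θ)

/-- Backward simulation relation: A-side simulates B-side. -/
private inductive S1 (sub : SessionType → SessionType → Prop) (η θ : SessionType) :
    SessionType → SessionType → Prop
  | base (ρ σ : SessionType) :
      S1 sub η θ (par (choice (Ach η θ) ρ) σ) (par (choice (Bch η θ) ρ) σ)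
  | id (x : SessionType) : S1 sub η θ x x
  | pend (x σ' : SessionType) : Reds sub x (par η σ') → Reds sub x (par θ σ') →
      S1 sub η θ x (par (ichoice η θ) σ')

/-- Forward simulation relation: B-side simulates A-side (for tick transfer). -/
private inductive J1 (η θ : SessionType) : SessionType → SessionType → Prop
  | base (ρ σ : SessionType) :
      J1 η θ (par (choice (Ach η θ) ρ) σ) (par (choice (Bch η θ) ρ) σ)
  | id (x : SessionType) : J1 η θ x x

/-- Backward simulation relation for the converse direction. -/
private inductive S2 (η θ : SessionType) : SessionType → SessionType → Prop
  | base (ρ σ : SessionType) :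
      S2 η θ (par (choice (Bch η θ) ρ) σ) (par (choice (Ach η θ) ρ) σ)
  | id (x : SessionType) : S2 η θ x x

/-- Forward simulation relation for the converse direction. -/
private inductive J2 (sub : SessionType → SessionType → Prop) (η θ : SessionType) :
    SessionType → SessionType → Prop
  | base (ρ σ : SessionType) :
      J2 sub η θ (par (choice (Bch η θ) ρ) σ) (par (choice (Ach η θ) ρ) σ)
  | id (x : SessionType) : J2 sub η θ x x
  | pend (σ' y : SessionType) : Reds sub y (par η σ') → Reds sub y (par θ σ') →
      J2 sub η θ (par (ichoice η θ) σ') y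

private lemma visA_inv {η θ : SessionType} {μ : Label} {c : SessionType}
    (h : Vis (Ach η θ) μ c) :
    ∃ v : Value, v ∈ tInt ∧ μ = Label.inV v ∧ (c = η ∨ c = θ) := by
  cases h with
  | r9l _ h => cases h with | r7 _ hv => exact ⟨_, hv, rfl, Or.inl rfl⟩
  | r9r _ h => cases h with | r7 _ hv => exact ⟨_, hv, rfl, Or.inr rfl⟩

private lemma visB_inv {η θ : SessionType} {μ : Label} {c : SessionType}
    (h : Vis (Bch η θ) μ c) :
    ∃ v : Value, v ∈ tInt ∧ μ = Label.inV v ∧ c = ichoice η θ := by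
  cases h with
  | r7 _ hv => exact ⟨_, hv, rfl, rfl⟩

private lemma visA {η θ : SessionType} {v : Value} (hv : v ∈ tInt) :
    Vis (Ach η θ) (Label.inV v) η :=
  Vis.r9l _ (Vis.r7 _ hv)

private lemma visA' {η θ : SessionType} {v : Value} (hv : v ∈ tInt) :
    Vis (Ach η θ) (Label.inV v) θ :=
  Vis.r9r _ (Vis.r7 _ hv)

private lemma visB {η θ : SessionType} {v : Value} (hv : v ∈ tInt) :
    Vis (Bch η θ) (Label.inV v) (ichoice η θ) :=
  Vis.r7 _ hv

private lemma redAB_inv {g ρ z : SessionType} (hg : ∀ w, ¬ Red sub g w)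
    (h : Red sub (choice g ρ) z) : ∃ ρ', Red sub ρ ρ' ∧ z = choice g ρ' := by
  cases h with
  | r8l _ h => exact absurd h (hg _)
  | r8r _ h => exact ⟨_, h, rfl⟩

private lemma noRedA {η θ : SessionType} : ∀ w, ¬ Red sub (Ach η θ) w := by
  intro w h
  cases h with
  | r8l _ h => cases h
  | r8r _ h => cases h

private lemma noRedB {η θ : SessionType} : ∀ w, ¬ Red sub (Bch η θ) w := by
  intro w h; cases h

/-- Single-step reduction as Reds. -/
private lemma rstep {a b : SessionType} (h : Red sub a b) : Reds sub a b :=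
  Relation.ReflTransGen.single h

/-- Backward simulation property of S1. -/
private lemma S1_bwd {η θ : SessionType} :
    ∀ x y y', S1 sub η θ x y → Red sub y y' →
      ∃ x', Reds sub x x' ∧ S1 sub η θ x' y' := by
  intro x y y' hS hred
  cases hS with
  | id => exact ⟨y', rstep hred, S1.id _⟩
  | base ρ σ =>
      cases hred with
      | r10l _ h =>
          obtain ⟨ρ', hρ, rfl⟩ := redAB_inv noRedB h
          exact ⟨_, rstep (Red.r10l _ (Red.r8r _ hρ)), S1.base ρ' σ⟩
      | r10r _ h => exact ⟨_, rstep (Red.r10r _ h), S1.base ρ _⟩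
      | r13l hv hw =>
          cases hv with
          | r9l _ h => exact absurd (visB_inv h) (by rintro ⟨v, -, ⟨⟩, -⟩)
          | r9r _ h =>
              exact ⟨_, rstep (Red.r13l (Vis.r9r _ h) hw), S1.id _⟩
      | r13r hv hw =>
          cases hv with
          | r9l _ h =>
              obtain ⟨v, hv', hμ, rfl⟩ := visB_inv h
              cases hμ
              refine ⟨_, Relation.ReflTransGen.refl, S1.pend _ _ ?_ ?_⟩
              · exact rstep (Red.r13r (Vis.r9l _ (visA hv')) hw)
              · exact rstep (Red.r13r (Vis.r9l _ (visA' hv')) hw)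
          | r9r _ h =>
              exact ⟨_, rstep (Red.r13r (Vis.r9r _ h) hw), S1.id _⟩
      | r14l hv hw hs =>
          cases hv with
          | r9l _ h => exact absurd (visB_inv h) (by rintro ⟨v, -, ⟨⟩, -⟩)
          | r9r _ h =>
              exact ⟨_, rstep (Red.r14l (Vis.r9r _ h) hw hs), S1.id _⟩
      | r14r hv hw hs =>
          cases hv with
          | r9l _ h => exact absurd (visB_inv h) (by rintro ⟨v, -, ⟨⟩, -⟩)
          | r9r _ h =>
              exact ⟨_, rstep (Red.r14r (Vis.r9r _ h) hw hs), S1.id _⟩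
      | r15l hv hw hs =>
          cases hv with
          | r9l _ h => exact absurd (visB_inv h) (by rintro ⟨v, -, ⟨⟩, -⟩)
          | r9r _ h =>
              exact ⟨_, rstep (Red.r15l (Vis.r9r _ h) hw hs), S1.id _⟩
      | r15r hv hw hs =>
          cases hv with
          | r9l _ h => exact absurd (visB_inv h) (by rintro ⟨v, -, ⟨⟩, -⟩)
          | r9r _ h =>
              exact ⟨_, rstep (Red.r15r (Vis.r9r _ h) hw hs), S1.id _⟩
  | pend x σ' h1 h2 =>
      cases hred with
      | r10l _ h =>
          cases h with
          | r2l => exact ⟨_, h1, S1.id _⟩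
          | r2r => exact ⟨_, h2, S1.id _⟩
      | r10r _ h =>
          exact ⟨x, Relation.ReflTransGen.refl,
            S1.pend _ _ (h1.tail (Red.r10r _ h)) (h2.tail (Red.r10r _ h))⟩
      | r13l hv _ => cases hv
      | r13r hv _ => cases hv
      | r14l hv _ _ => cases hv
      | r14r hv _ _ => cases hv
      | r15l hv _ _ => cases hv
      | r15r hv _ _ => cases hv

/-- Forward simulation property of J1. -/
private lemma J1_fwd {η θ : SessionType} :
    ∀ x y x', J1 η θ x y → Red sub x x' →
      ∃ y', Reds sub y y' ∧ J1 η θ x' y' := by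
  intro x y x' hS hred
  cases hS with
  | id => exact ⟨x', rstep hred, J1.id _⟩
  | base ρ σ =>
      cases hred with
      | r10l _ h =>
          obtain ⟨ρ', hρ, rfl⟩ := redAB_inv noRedA h
          exact ⟨_, rstep (Red.r10l _ (Red.r8r _ hρ)), J1.base ρ' σ⟩
      | r10r _ h => exact ⟨_, rstep (Red.r10r _ h), J1.base ρ _⟩
      | r13l hv hw =>
          cases hv with
          | r9l _ h => exact absurd (visA_inv h) (by rintro ⟨v, -, ⟨⟩, -⟩)
          | r9r _ h =>
              exact ⟨_, rstep (Red.r13l (Vis.r9r _ h) hw), J1.id _⟩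
      | r13r hv hw =>
          cases hv with
          | r9l _ h =>
              obtain ⟨v, hv', hμ, hc⟩ := visA_inv h
              cases hμ
              cases hc with
              | inl hc =>
                  subst hc
                  refine ⟨_, Relation.ReflTransGen.head
                    (Red.r13r (Vis.r9l _ (visB hv')) hw)
                    (rstep (Red.r10l _ (Red.r2l _ _))), J1.id _⟩
              | inr hc =>
                  subst hc
                  refine ⟨_, Relation.ReflTransGen.head
                    (Red.r13r (Vis.r9l _ (visB hv')) hw)
                    (rstep (Red.r10l _ (Red.r2r _ _))), J1.id _⟩
          | r9r _ h =>
              exact ⟨_, rstep (Red.r13r (Vis.r9r _ h) hw), J1.id _⟩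
      | r14l hv hw hs =>
          cases hv with
          | r9l _ h => exact absurd (visA_inv h) (by rintro ⟨v, -, ⟨⟩, -⟩)
          | r9r _ h =>
              exact ⟨_, rstep (Red.r14l (Vis.r9r _ h) hw hs), J1.id _⟩
      | r14r hv hw hs =>
          cases hv with
          | r9l _ h => exact absurd (visA_inv h) (by rintro ⟨v, -, ⟨⟩, -⟩)
          | r9r _ h =>
              exact ⟨_, rstep (Red.r14r (Vis.r9r _ h) hw hs), J1.id _⟩
      | r15l hv hw hs =>
          cases hv with
          | r9l _ h => exact absurd (visA_inv h) (by rintro ⟨v, -, ⟨⟩, -⟩)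
          | r9r _ h =>
              exact ⟨_, rstep (Red.r15l (Vis.r9r _ h) hw hs), J1.id _⟩
      | r15r hv hw hs =>
          cases hv with
          | r9l _ h => exact absurd (visA_inv h) (by rintro ⟨v, -, ⟨⟩, -⟩)
          | r9r _ h =>
              exact ⟨_, rstep (Red.r15r (Vis.r9r _ h) hw hs), J1.id _⟩

/-- Tick transfer for J1. -/
private lemma J1_tick {η θ : SessionType} :
    ∀ x y x₂, J1 η θ x y → Vis x Label.tick x₂ → CanTick sub y := by
  intro x y x₂ hS htick
  cases hS with
  | id => exact ⟨_, _, Relation.ReflTransGen.refl, htick⟩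
  | base ρ σ =>
      cases htick with
      | r11l _ h hne => exact absurd rfl hne
      | r11r _ h hne => exact absurd rfl hne
      | r12 hv hw =>
          cases hv with
          | r9l _ h => exact absurd (visA_inv h) (by rintro ⟨v, -, ⟨⟩, -⟩)
          | r9r _ h =>
              exact ⟨_, _, Relation.ReflTransGen.refl, Vis.r12 (Vis.r9r _ h) hw⟩

/-- Backward simulation property of S2. -/
private lemma S2_bwd {η θ : SessionType} :
    ∀ x y y', S2 η θ x y → Red sub y y' →
      ∃ x', Reds sub x x' ∧ S2 η θ x' y' := by
  intro x y y' hS hred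
  cases hS with
  | id => exact ⟨y', rstep hred, S2.id _⟩
  | base ρ σ =>
      cases hred with
      | r10l _ h =>
          obtain ⟨ρ', hρ, rfl⟩ := redAB_inv noRedA h
          exact ⟨_, rstep (Red.r10l _ (Red.r8r _ hρ)), S2.base ρ' σ⟩
      | r10r _ h => exact ⟨_, rstep (Red.r10r _ h), S2.base ρ _⟩
      | r13l hv hw =>
          cases hv with
          | r9l _ h => exact absurd (visA_inv h) (by rintro ⟨v, -, ⟨⟩, -⟩)
          | r9r _ h =>
              exact ⟨_, rstep (Red.r13l (Vis.r9r _ h) hw), S2.id _⟩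
      | r13r hv hw =>
          cases hv with
          | r9l _ h =>
              obtain ⟨v, hv', hμ, hc⟩ := visA_inv h
              cases hμ
              cases hc with
              | inl hc =>
                  subst hc
                  exact ⟨_, Relation.ReflTransGen.head
                    (Red.r13r (Vis.r9l _ (visB hv')) hw)
                    (rstep (Red.r10l _ (Red.r2l _ _))), S2.id _⟩
              | inr hc =>
                  subst hc
                  exact ⟨_, Relation.ReflTransGen.head
                    (Red.r13r (Vis.r9l _ (visB hv')) hw)
                    (rstep (Red.r10l _ (Red.r2r _ _))), S2.id _⟩
          | r9r _ h =>
              exact ⟨_, rstep (Red.r13r (Vis.r9r _ h) hw), S2.id _⟩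
      | r14l hv hw hs =>
          cases hv with
          | r9l _ h => exact absurd (visA_inv h) (by rintro ⟨v, -, ⟨⟩, -⟩)
          | r9r _ h =>
              exact ⟨_, rstep (Red.r14l (Vis.r9r _ h) hw hs), S2.id _⟩
      | r14r hv hw hs =>
          cases hv with
          | r9l _ h => exact absurd (visA_inv h) (by rintro ⟨v, -, ⟨⟩, -⟩)
          | r9r _ h =>
              exact ⟨_, rstep (Red.r14r (Vis.r9r _ h) hw hs), S2.id _⟩
      | r15l hv hw hs =>
          cases hv with
          | r9l _ h => exact absurd (visA_inv h) (by rintro ⟨v, -, ⟨⟩, -⟩)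
          | r9r _ h =>
              exact ⟨_, rstep (Red.r15l (Vis.r9r _ h) hw hs), S2.id _⟩
      | r15r hv hw hs =>
          cases hv with
          | r9l _ h => exact absurd (visA_inv h) (by rintro ⟨v, -, ⟨⟩, -⟩)
          | r9r _ h =>
              exact ⟨_, rstep (Red.r15r (Vis.r9r _ h) hw hs), S2.id _⟩

/-- Forward simulation property of J2. -/
private lemma J2_fwd {η θ : SessionType} :
    ∀ x y x', J2 sub η θ x y → Red sub x x' →
      ∃ y', Reds sub y y' ∧ J2 sub η θ x' y' := by
  intro x y x' hS hred
  cases hS with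
  | id => exact ⟨x', rstep hred, J2.id _⟩
  | base ρ σ =>
      cases hred with
      | r10l _ h =>
          obtain ⟨ρ', hρ, rfl⟩ := redAB_inv noRedB h
          exact ⟨_, rstep (Red.r10l _ (Red.r8r _ hρ)), J2.base ρ' σ⟩
      | r10r _ h => exact ⟨_, rstep (Red.r10r _ h), J2.base ρ _⟩
      | r13l hv hw =>
          cases hv with
          | r9l _ h => exact absurd (visB_inv h) (by rintro ⟨v, -, ⟨⟩, -⟩)
          | r9r _ h =>
              exact ⟨_, rstep (Red.r13l (Vis.r9r _ h) hw), J2.id _⟩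
      | r13r hv hw =>
          cases hv with
          | r9l _ h =>
              obtain ⟨v, hv', hμ, rfl⟩ := visB_inv h
              cases hμ
              refine ⟨_, Relation.ReflTransGen.refl, J2.pend _ _ ?_ ?_⟩
              · exact rstep (Red.r13r (Vis.r9l _ (visA hv')) hw)
              · exact rstep (Red.r13r (Vis.r9l _ (visA' hv')) hw)
          | r9r _ h =>
              exact ⟨_, rstep (Red.r13r (Vis.r9r _ h) hw), J2.id _⟩
      | r14l hv hw hs =>
          cases hv with
          | r9l _ h => exact absurd (visB_inv h) (by rintro ⟨v, -, ⟨⟩, -⟩)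
          | r9r _ h =>
              exact ⟨_, rstep (Red.r14l (Vis.r9r _ h) hw hs), J2.id _⟩
      | r14r hv hw hs =>
          cases hv with
          | r9l _ h => exact absurd (visB_inv h) (by rintro ⟨v, -, ⟨⟩, -⟩)
          | r9r _ h =>
              exact ⟨_, rstep (Red.r14r (Vis.r9r _ h) hw hs), J2.id _⟩
      | r15l hv hw hs =>
          cases hv with
          | r9l _ h => exact absurd (visB_inv h) (by rintro ⟨v, -, ⟨⟩, -⟩)
          | r9r _ h =>
              exact ⟨_, rstep (Red.r15l (Vis.r9r _ h) hw hs), J2.id _⟩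
      | r15r hv hw hs =>
          cases hv with
          | r9l _ h => exact absurd (visB_inv h) (by rintro ⟨v, -, ⟨⟩, -⟩)
          | r9r _ h =>
              exact ⟨_, rstep (Red.r15r (Vis.r9r _ h) hw hs), J2.id _⟩
  | pend σ' y h1 h2 =>
      cases hred with
      | r10l _ h =>
          cases h with
          | r2l => exact ⟨_, h1, J2.id _⟩
          | r2r => exact ⟨_, h2, J2.id _⟩
      | r10r _ h =>
          exact ⟨y, Relation.ReflTransGen.refl,
            J2.pend _ _ (h1.tail (Red.r10r _ h)) (h2.tail (Red.r10r _ h))⟩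
      | r13l hv _ => cases hv
      | r13r hv _ => cases hv
      | r14l hv _ _ => cases hv
      | r14r hv _ _ => cases hv
      | r15l hv _ _ => cases hv
      | r15r hv _ _ => cases hv

/-- Tick transfer for J2. -/
private lemma J2_tick {η θ : SessionType} :
    ∀ x y x₂, J2 sub η θ x y → Vis x Label.tick x₂ → CanTick sub y := by
  intro x y x₂ hS htick
  cases hS with
  | id => exact ⟨_, _, Relation.ReflTransGen.refl, htick⟩
  | base ρ σ =>
      cases htick with
      | r11l _ h hne => exact absurd rfl hne
      | r11r _ h hne => exact absurd rfl hne
      | r12 hv hw =>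
          cases hv with
          | r9l _ h => exact absurd (visB_inv h) (by rintro ⟨v, -, ⟨⟩, -⟩)
          | r9r _ h =>
              exact ⟨_, _, Relation.ReflTransGen.refl, Vis.r12 (Vis.r9r _ h) hw⟩
  | pend σ' y h1 h2 =>
      cases htick with
      | r11l _ h hne => exact absurd rfl hne
      | r11r _ h hne => exact absurd rfl hne
      | r12 hv hw => cases hv

private lemma dir1 {η θ ρ σ : SessionType}
    (hX : CompleteP sub (par (choice (Ach η θ) ρ) σ)) :
    CompleteP sub (par (choice (Bch η θ) ρ) σ) := by
  refine bwd_sim (S1 sub η θ) _ _ (S1.base ρ σ) S1_bwd ?_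
  intro x y hXx hS
  cases hS with
  | base ρ' σ' => exact fwd_sim (J1 η θ) J1_fwd J1_tick _ _ (J1.base ρ' σ') (hX _ hXx)
  | id => exact hX _ hXx
  | pend x σ' h1 h2 =>
      exact canTick_of_reds_s13 (rstep (Red.r10l _ (Red.r2l _ _)))
        (hX _ (Relation.ReflTransGen.trans hXx h1))

private lemma dir2 {η θ ρ σ : SessionType}
    (hX : CompleteP sub (par (choice (Bch η θ) ρ) σ)) :
    CompleteP sub (par (choice (Ach η θ) ρ) σ) := by
  refine bwd_sim (S2 η θ) _ _ (S2.base ρ σ) S2_bwd ?_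
  intro x y hXx hS
  cases hS with
  | base ρ' σ' => exact fwd_sim (J2 sub η θ) J2_fwd J2_tick _ _ (J2.base ρ' σ') (hX _ hXx)
  | id => exact hX _ hXx

end DistribProof

theorem input_distributes_over_internal_choice (η θ : SessionType) :
    SSEquiv (SessionType.choice (SessionType.inV tInt η) (SessionType.inV tInt θ))
      (SessionType.inV tInt (SessionType.ichoice η θ)) := by
  constructor
  · intro ρ σ hX
    exact dir1 hX
  · intro ρ σ hX
    exact dir2 hX
end
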